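/- arXiv:math/0410301 — 4 statements merged into one kernel-verified Lean document; each statement's English description precedes it below -/
import Mathlib

section
/- An oriented poset (P,O) arises from a labelling ω: P → [N] (with strict edges exactly those edges (s,t), s<t, having ω(s)>ω(t)) if and only if (P,O) has no cycles, where a cycle is a closed directed path in the Hasse diagram with strict edges oriented upwards and weak edges oriented downwards. -/
/-!
A labelling induces the orientation exactly when its labels strictly decrease along every
oriented step (up a strict cover or down a weak one). Labels cannot decrease all the way
around a cycle; conversely, if there is no cycle, the transitive closure of the reversed step
relation is a strict order, and enumerating a linear extension of it gives the labelling.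
-/

open Relation

theorem Relation.exists_equiv_fin_lt_iff_forall_not_transGen_self {Q : Type} [Fintype Q]
    (r : Q → Q → Prop) :
    (∃ ω : Q ≃ Fin (Fintype.card Q), ∀ a b, r a b → ω a < ω b) ↔
      ∀ a, ¬ TransGen r a a := by
  constructor
  · rintro ⟨ω, hω⟩ a hcycle
    have hlt : TransGen (· < ·) (ω a) (ω a) := hcycle.lift ω hω
    rw [transGen_eq_self] at hlt
    exact lt_irrefl _ hlt
  · intro hacyclic
    let _ : IsStrictOrder Q (TransGen r) :=
      { irrefl := hacyclic, trans := fun _ _ _ => TransGen.trans }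
    let _ : PartialOrder Q := partialOrderOfSO (TransGen r)
    let _ : Fintype (LinearExtension Q) := ‹Fintype Q›
    have hext : StrictMono (toLinearExtension : Q →o LinearExtension Q) :=
      toLinearExtension.monotone.strictMono_of_injective fun _ _ h => h
    let e := (monoEquivOfFin (LinearExtension Q) rfl).symm
    exact ⟨e.toEquiv, fun a b hab => e.strictMono (hext (TransGen.single hab))⟩

def orientedStep {P : Type} [PartialOrder P] (strictE : P → P → Prop) (a b : P) : Prop :=
  (a ⋖ b ∧ strictE a b) ∨ (b ⋖ a ∧ ¬ strictE b a)

theorem forall_covBy_iff_lt_iff_forall_orientedStep_lt {P β : Type} [PartialOrder P]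
    [LinearOrder β] (strictE : P → P → Prop) {ω : P → β} (hω : Function.Injective ω) :
    (∀ s t, s ⋖ t → (strictE s t ↔ ω t < ω s)) ↔
      ∀ a b, orientedStep strictE a b → ω b < ω a := by
  constructor
  · rintro h a b (⟨hcov, hstrict⟩ | ⟨hcov, hweak⟩)
    · exact (h a b hcov).mp hstrict
    · exact lt_of_le_of_ne (not_lt.mp (mt (h b a hcov).mpr hweak)) (hω.ne hcov.ne)
  · intro h s t hcov
    refine ⟨fun hstrict => h s t (Or.inl ⟨hcov, hstrict⟩), fun hlt => ?_⟩
    by_contra hweak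
    exact lt_asymm hlt (h t s (Or.inr ⟨hcov, hweak⟩))

theorem stmt3_general {P : Type} [Fintype P] [PartialOrder P] (strictE : P → P → Prop) :
    (∃ ω : P ≃ Fin (Fintype.card P),
        ∀ s t, s ⋖ t → (strictE s t ↔ (ω t : ℕ) < (ω s : ℕ))) ↔
      (∀ a : P, ¬ Relation.TransGen
        (fun a b => (a ⋖ b ∧ strictE a b) ∨ (b ⋖ a ∧ ¬ strictE b a)) a a) := by
  calc (∃ ω : P ≃ Fin (Fintype.card P),
        ∀ s t, s ⋖ t → (strictE s t ↔ (ω t : ℕ) < (ω s : ℕ)))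
      ↔ ∃ ω : P ≃ Fin (Fintype.card P), ∀ a b, flip (orientedStep strictE) a b → ω a < ω b :=
        exists_congr fun ω => by
          simp only [Fin.lt_def, flip]
          exact (forall_covBy_iff_lt_iff_forall_orientedStep_lt strictE
            (Fin.val_injective.comp ω.injective)).trans forall_comm
    _ ↔ ∀ a, ¬ TransGen (flip (orientedStep strictE)) a a :=
        exists_equiv_fin_lt_iff_forall_not_transGen_self _
    _ ↔ _ := forall_congr' fun a => not_congr transGen_swap

/-- An oriented poset (a finite poset with each covering edge designated strict or weak)
arises from a bijective labelling `ω : P → [N]` (strict edges being exactly the covers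
`s ⋖ t` with `ω s > ω t`) if and only if it has no cycles: no nontrivial closed directed
path travelling up along strict edges and down along weak edges. -/
theorem stmt3 {P : Type} [Fintype P] [PartialOrder P] (strictE : P → P → Prop)
    (hE : ∀ s t, strictE s t → s ⋖ t) :
    (∃ ω : P ≃ Fin (Fintype.card P),
        ∀ s t, s ⋖ t → (strictE s t ↔ (ω t : ℕ) < (ω s : ℕ))) ↔
      (∀ a : P, ¬ Relation.TransGen
        (fun a b => (a ⋖ b ∧ strictE a b) ∨ (b ⋖ a ∧ ¬ strictE b a)) a a) :=
  stmt3_general strictE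
end

section
/- For any cylindric skew shape C, the cylindric skew Schur function s_C(x) is a symmetric function. -/
open scoped Classical
open Relation

noncomputable section

/-- Formal power series in countably many variables `x_0, x_1, ...` over `ℚ`. -/
abbrev FPS := MvPowerSeries ℕ ℚ

/-- A partition, encoded as a weakly decreasing, eventually-zero function giving part sizes. -/
def IsPtn (p : ℕ → ℕ) : Prop := Antitone p ∧ ∃ N, p N = 0

/-- The Young diagram (set of cells `(row, column)`, zero-indexed) of `p`. -/
def cells (p : ℕ → ℕ) : Set (ℕ × ℕ) := {c | c.2 < p c.1}

/-- The conjugate partition. -/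
def conjPtn (p : ℕ → ℕ) : ℕ → ℕ := fun j => Nat.card {i : ℕ // j < p i}

/-- `p` fits in a `k × w` box: at most `k` parts, each of size at most `w`. -/
def FitsBox (p : ℕ → ℕ) (k w : ℕ) : Prop := p 0 ≤ w ∧ p k = 0

/-- Generating function counting fillings `T` of a set `S` of boxes satisfying a predicate `Ok`,
weighted by content: the coefficient of `∏ x_v^{e v}` is the number of admissible fillings with
exactly `e v` boxes of `S` labelled `v`. -/
def tabSeries {X : Type} (S : Set X) (Ok : (X → ℕ) → Prop) : FPS :=
  fun e => (Nat.card {T : X → ℕ //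
    Ok T ∧ (∀ x, x ∉ S → T x = 0) ∧ ∀ v, Nat.card {x : X // x ∈ S ∧ T x = v} = e v} : ℚ)

/-- Semistandardness for fillings of a set of cells in `ℕ × ℕ`:
weakly increasing along rows, strictly increasing down columns. -/
def RowColOk (S : Set (ℕ × ℕ)) (T : ℕ × ℕ → ℕ) : Prop :=
  (∀ r c, (r, c) ∈ S → (r, c+1) ∈ S → T (r, c) ≤ T (r, c+1)) ∧
  (∀ r c, (r, c) ∈ S → (r+1, c) ∈ S → T (r, c) < T (r+1, c))

/-- The skew Schur function `s_{lam/mu}` as the generating function of semistandard skew tableaux. -/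
def skewSchur (lam mu : ℕ → ℕ) : FPS :=
  tabSeries (cells lam \ cells mu) (RowColOk (cells lam \ cells mu))

/-- The Schur function `s_lam`. -/
def schur (lam : ℕ → ℕ) : FPS := skewSchur lam (fun _ => 0)

/-- A symmetric function is Schur-positive if it is a non-negative linear combination of
Schur functions. -/
def IsSchurPos (f : FPS) : Prop :=
  ∃ (S : Finset (ℕ → ℕ)) (c : (ℕ → ℕ) → ℚ),
    (∀ p ∈ S, IsPtn p) ∧ (∀ p ∈ S, 0 ≤ c p) ∧ f = ∑ p ∈ S, c p • schur p

/-- The cylinder `C_{vu} = ℤ² / (-u,v)ℤ`. -/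
abbrev Cyl (u v : ℕ) := (ℤ × ℤ) ⧸ AddSubgroup.zmultiples ((-(u : ℤ), (v : ℤ)) : ℤ × ℤ)

/-- The quotient map onto the cylinder. -/
def cmk (u v : ℕ) (a : ℤ × ℤ) : Cyl u v := QuotientAddGroup.mk a

/-- `y` is the right neighbour of `x` in its row (a weak edge of the cylindric poset). -/
def rowAdj (u v : ℕ) (x y : Cyl u v) : Prop :=
  ∃ a : ℤ × ℤ, x = cmk u v a ∧ y = cmk u v (a.1 + 1, a.2)

/-- `y` is the next element above `x` in its column (a strict edge of the cylindric poset). -/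
def colAdj (u v : ℕ) (x y : Cyl u v) : Prop :=
  ∃ a : ℤ × ℤ, x = cmk u v a ∧ y = cmk u v (a.1, a.2 + 1)

/-- The partial order on the cylinder generated by the row and column steps. -/
def cle (u v : ℕ) (x y : Cyl u v) : Prop :=
  ∃ a b : ℤ × ℤ, x = cmk u v a ∧ y = cmk u v b ∧ a.1 ≤ b.1 ∧ a.2 ≤ b.2

/-- A cylindric skew shape: a finite convex subposet of the cylinder. -/
def IsCylShape (u v : ℕ) (C : Set (Cyl u v)) : Prop :=
  C.Finite ∧ ∀ x y z, cle u v x y → cle u v y z → x ∈ C → z ∈ C → y ∈ C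

/-- Semistandardness for cylindric tableaux: weakly increasing along rows,
strictly increasing along columns. -/
def CylOk (u v : ℕ) (C : Set (Cyl u v)) (T : Cyl u v → ℕ) : Prop :=
  (∀ x y, x ∈ C → y ∈ C → rowAdj u v x y → T x ≤ T y) ∧
  (∀ x y, x ∈ C → y ∈ C → colAdj u v x y → T x < T y)

/-- The cylindric skew Schur function of a cylindric skew shape `C`. -/
def cylSchur (u v : ℕ) (C : Set (Cyl u v)) : FPS := tabSeries C (CylOk u v C)

/-!
The Bender–Knuth involution works on cylindric tableaux as on ordinary ones. Fix `i`. A cell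
carrying `i` (resp. `i + 1`) is *paired* when the cell just above (resp. below) it in its column
carries `i + 1` (resp. `i`); the other cells with entry `i` or `i + 1` are *free*. Since `v > 0`,
each row of the cylinder is a copy of `ℤ`, and by semistandardness the free cells of a row read
`i^a (i+1)^b` from left to right. Refilling them as `i^b (i+1)^a` keeps the tableau
semistandard, is an involution, and exchanges the numbers of entries `i` and `i + 1`. So `s_C`
is invariant under the transpositions of adjacent variables, hence under all transpositions,
and a permutation acts on a given coefficient like a product of transpositions that agrees
with it on the finitely many variables involved.
-/

namespace CylindricSchur

section Rank

variable {α : Type*} [LinearOrder α] {S : Set α}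

def rankIn (S : Set α) (k : α) : ℕ := (S ∩ Set.Iio k).ncard

lemma rankIn_lt_ncard (hS : S.Finite) {k : α} (hk : k ∈ S) : rankIn S k < S.ncard :=
  Set.ncard_lt_ncard ((Set.ssubset_iff_of_subset Set.inter_subset_left).2
    ⟨k, hk, fun h => lt_irrefl k h.2⟩) hS

lemma rankIn_lt_rankIn (hS : S.Finite) {k k' : α} (hk : k ∈ S) (h : k < k') :
    rankIn S k < rankIn S k' :=
  Set.ncard_lt_ncard ((Set.ssubset_iff_of_subset
    (Set.inter_subset_inter_right S (Set.Iio_subset_Iio h.le))).2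
    ⟨k, ⟨hk, h⟩, fun h' => lt_irrefl k h'.2⟩) (hS.inter_of_left _)

lemma rankIn_injOn (hS : S.Finite) : Set.InjOn (rankIn S) S :=
  StrictMonoOn.injOn fun _ hk _ _ h => rankIn_lt_rankIn hS hk h

lemma image_rankIn (hS : S.Finite) : rankIn S '' S = Set.Iio S.ncard := by
  refine Set.eq_of_subset_of_ncard_le ?_ ?_ (Set.finite_Iio _)
  · rintro _ ⟨k, hk, rfl⟩
    exact rankIn_lt_ncard hS hk
  · rw [Set.ncard_Iio_nat, (rankIn_injOn hS).ncard_image]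

lemma ncard_setOf_rankIn_lt (hS : S.Finite) {b : ℕ} (hb : b ≤ S.ncard) :
    {k | k ∈ S ∧ rankIn S k < b}.ncard = b := by
  have himage : rankIn S '' {k | k ∈ S ∧ rankIn S k < b} = Set.Iio b := by
    refine Set.Subset.antisymm (by rintro _ ⟨k, hk, rfl⟩; exact hk.2) fun n hn => ?_
    obtain ⟨k, hk, rfl⟩ := (image_rankIn hS).ge (lt_of_lt_of_le hn hb)
    exact ⟨k, ⟨hk, hn⟩, rfl⟩
  calc _ = (rankIn S '' {k | k ∈ S ∧ rankIn S k < b}).ncard :=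
        (((rankIn_injOn hS).mono fun _ hk => hk.1).ncard_image).symm
    _ = b := by rw [himage, Set.ncard_Iio_nat]

lemma ncard_setOf_not_rankIn_lt (hS : S.Finite) {b : ℕ} (hb : b ≤ S.ncard) :
    {k | k ∈ S ∧ ¬ rankIn S k < b}.ncard = S.ncard - b := by
  have hdiff : {k | k ∈ S ∧ ¬ rankIn S k < b} = S \ {k | k ∈ S ∧ rankIn S k < b} := by
    ext k
    simp only [Set.mem_sdiff, Set.mem_ofPred_eq]
    tauto
  rw [hdiff, Set.ncard_sdiff (fun _ hk => hk.1) (hS.subset fun _ hk => hk.1),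
    ncard_setOf_rankIn_lt hS hb]

lemma mem_iff_rankIn_lt_ncard (hS : S.Finite) {A B : Set α} (hAB : S = A ∪ B)
    (hlt : ∀ a ∈ A, ∀ b ∈ B, a < b) {k : α} (hk : k ∈ S) :
    k ∈ A ↔ rankIn S k < A.ncard := by
  have hAS : A ⊆ S := hAB ▸ Set.subset_union_left
  constructor
  · intro hkA
    refine Set.ncard_lt_ncard ((Set.ssubset_iff_of_subset fun j hj => ?_).2
      ⟨k, hkA, fun h => lt_irrefl k h.2⟩) (hS.subset hAS)
    rcases (hAB ▸ hj.1 : j ∈ A ∪ B) with hjA | hjB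
    · exact hjA
    · exact absurd hj.2 (hlt k hkA j hjB).not_gt
  · intro hrk
    by_contra hkA
    have hkB : k ∈ B := (hAB ▸ hk : k ∈ A ∪ B).resolve_left hkA
    exact hrk.not_ge (Set.ncard_le_ncard (fun a ha => ⟨hAS ha, hlt a ha k hkB⟩)
      (hS.inter_of_left _))

lemma ncard_preimage_add (S : Set ℤ) (d : ℤ) : ((d + ·) ⁻¹' S).ncard = S.ncard :=
  Set.ncard_preimage_of_injective_subset_range (add_right_injective d)
    fun x _ => ⟨x - d, add_sub_cancel d x⟩

lemma rankIn_preimage_add (S : Set ℤ) (d k : ℤ) :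
    rankIn ((d + ·) ⁻¹' S) k = rankIn S (d + k) := by
  rw [rankIn, rankIn, ← ncard_preimage_add (S ∩ Set.Iio (d + k)) d, Set.preimage_inter,
    Set.preimage_const_add_Iio, add_sub_cancel_left]

end Rank

section Fibres

lemma ncard_eq_of_ncard_inter_preimage_eq {X Y : Type*} (f : X → Y) {A B : Set X}
    (hA : A.Finite) (hB : B.Finite) (h : ∀ y, (A ∩ f ⁻¹' {y}).ncard = (B ∩ f ⁻¹' {y}).ncard) :
    A.ncard = B.ncard := by
  classical
  let t := (hA.union hB).toFinset.image f
  have hsum : ∀ S ⊆ A ∪ B, S.Finite → S.ncard = ∑ y ∈ t, (S ∩ f ⁻¹' {y}).ncard := by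
    intro S hSAB hS
    rw [Set.ncard_eq_toFinset_card S hS, Finset.card_eq_sum_card_fiberwise (f := f) (t := t)
      fun x hx => Finset.mem_image_of_mem f (by simpa using hSAB (by simpa using hx))]
    refine Finset.sum_congr rfl fun y _ => ?_
    rw [← Set.ncard_coe_finset]
    congr 1
    ext x
    simp
  rw [hsum A Set.subset_union_left hA, hsum B Set.subset_union_right hB]
  exact Finset.sum_congr rfl fun y _ => h y

end Fibres

section Symmetry

def permStabilizer {ι R : Type*} [CommSemiring R] (f : MvPowerSeries ι R) :
    Subgroup (Equiv.Perm ι) where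
  carrier := {σ | ∀ e, MvPowerSeries.coeff (Finsupp.equivMapDomain σ e) f =
    MvPowerSeries.coeff e f}
  one_mem' e := by
    rw [show ((1 : Equiv.Perm ι) : ι ≃ ι) = Equiv.refl ι from rfl, Finsupp.equivMapDomain_refl]
  mul_mem' {σ τ} hσ hτ e := by
    rw [show ((σ * τ : Equiv.Perm ι) : ι ≃ ι) = (τ : ι ≃ ι).trans σ from rfl,
      Finsupp.equivMapDomain_trans]
    exact (hσ _).trans (hτ e)
  inv_mem' {σ} hσ e := by
    have h := hσ (Finsupp.equivMapDomain σ.symm e)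
    rw [← Finsupp.equivMapDomain_trans, Equiv.symm_trans_self, Finsupp.equivMapDomain_refl] at h
    exact h.symm

lemma swap_mem_of_forall_swap_add_one_mem {H : Subgroup (Equiv.Perm ℕ)}
    (h : ∀ a, Equiv.swap a (a + 1) ∈ H) (a b : ℕ) : Equiv.swap a b ∈ H := by
  have hlt : ∀ a b, a < b → Equiv.swap a b ∈ H := by
    intro a b hab
    induction b, hab using Nat.le_induction with
    | base => exact h a
    | succ b hab ih =>
      have h' := H.mul_mem (H.mul_mem (h b) ih) (h b)
      rwa [Equiv.swap_mul_swap_mul_swap (by omega) (by omega), Equiv.swap_comm] at h'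
  rcases lt_trichotomy a b with hab | rfl | hab
  · exact hlt a b hab
  · rw [Equiv.swap_self]
    exact H.one_mem
  · rw [Equiv.swap_comm]
    exact hlt b a hab

lemma exists_mem_eqOn_of_forall_swap_mem {α : Type*} [DecidableEq α]
    {H : Subgroup (Equiv.Perm α)} (h : ∀ a b, Equiv.swap a b ∈ H) (s : Finset α)
    (g : Equiv.Perm α) :
    ∃ σ ∈ H, ∀ x ∈ s, σ x = g x := by
  induction s using Finset.induction_on with
  | empty => exact ⟨1, H.one_mem, by simp⟩
  | insert a s ha ih =>
    obtain ⟨σ, hσ, hσg⟩ := ih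
    refine ⟨Equiv.swap (σ a) (g a) * σ, H.mul_mem (h _ _) hσ, fun x hx => ?_⟩
    rcases Finset.mem_insert.1 hx with rfl | hxs
    · rw [Equiv.Perm.mul_apply, Equiv.swap_apply_left]
    · have hxa : x ≠ a := fun hxa => ha (hxa ▸ hxs)
      rw [Equiv.Perm.mul_apply, hσg x hxs, Equiv.swap_apply_of_ne_of_ne]
      · exact fun hgx => hxa (σ.injective ((hσg x hxs).trans hgx))
      · exact fun hgx => hxa (g.injective hgx)

lemma mem_permStabilizer_tabSeries {X : Type} {S : Set X} {Ok : (X → ℕ) → Prop}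
    {σ : Equiv.Perm ℕ} (hσ : Function.Involutive σ) (φ : (X → ℕ) → X → ℕ)
    (ok_φ : ∀ T, Ok T → Ok (φ T)) (φ_φ : ∀ T, Ok T → φ (φ T) = T)
    (φ_of_notMem : ∀ T, Ok T → ∀ x ∉ S, φ T x = T x)
    (card_φ : ∀ T, Ok T → ∀ w,
      Nat.card {x // x ∈ S ∧ φ T x = w} = Nat.card {x // x ∈ S ∧ T x = σ w}) :
    σ ∈ permStabilizer (tabSeries S Ok) := by
  have hφ : ∀ (d : ℕ → ℕ) T, Ok T ∧ (∀ x ∉ S, T x = 0) ∧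
      (∀ w, Nat.card {x // x ∈ S ∧ T x = w} = d w) →
      Ok (φ T) ∧ (∀ x ∉ S, φ T x = 0) ∧ ∀ w, Nat.card {x // x ∈ S ∧ φ T x = w} = d (σ w) :=
    fun d T ⟨hT, hS, hd⟩ => ⟨ok_φ T hT, fun x hx => (φ_of_notMem T hT x hx).trans (hS x hx),
      fun w => (card_φ T hT w).trans (hd _)⟩
  intro e
  have he : ⇑(Finsupp.equivMapDomain σ e) = fun w => e (σ w) := by
    funext w
    rw [Finsupp.equivMapDomain_apply, (σ.symm_apply_eq).2 (hσ w).symm]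
  change (Nat.card {T // _ ∧ _ ∧ ∀ w, _ = Finsupp.equivMapDomain σ e w} : ℚ) =
    Nat.card {T // _ ∧ _ ∧ ∀ w, _ = e w}
  simp only [he]
  refine congrArg Nat.cast (Nat.card_congr
    ⟨fun T => ⟨φ T.1, ?_⟩, fun T => ⟨φ T.1, hφ _ _ T.2⟩,
      fun T => Subtype.ext (φ_φ _ T.2.1), fun T => Subtype.ext (φ_φ _ T.2.1)⟩)
  simpa only [hσ _] using hφ _ _ T.2

end Symmetry

section Cylinder

variable {u v : ℕ}

def rowStep : Cyl u v := cmk u v (1, 0)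

def colStep : Cyl u v := cmk u v (0, 1)

lemma cmk_add (a b : ℤ × ℤ) : cmk u v (a + b) = cmk u v a + cmk u v b := rfl

lemma zsmul_rowStep (k : ℤ) : k • (rowStep : Cyl u v) = cmk u v (k, 0) := by
  rw [rowStep, cmk, ← QuotientAddGroup.mk_zsmul, Prod.smul_mk, smul_zero, zsmul_one,
    Int.cast_id]
  rfl

lemma zsmul_rowStep_injective (hv : 0 < v) :
    Function.Injective fun k : ℤ => k • (rowStep : Cyl u v) := by
  intro k k' h
  simp only [zsmul_rowStep, cmk, QuotientAddGroup.eq, AddSubgroup.mem_zmultiples_iff,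
    Prod.ext_iff] at h
  obtain ⟨t, htu, htv⟩ := h
  simp only [Prod.smul_fst, Prod.smul_snd, Prod.fst_add, Prod.snd_add, Prod.fst_neg,
    Prod.snd_neg, smul_eq_mul] at htu htv
  have ht : t = 0 := by
    rcases mul_eq_zero.1 (htv.trans (by simp)) with ht | ht
    · exact ht
    · omega
  subst ht
  omega

lemma add_zsmul_rowStep_injective (hv : 0 < v) (x : Cyl u v) :
    Function.Injective fun k : ℤ => x + k • rowStep :=
  (add_right_injective x).comp (zsmul_rowStep_injective hv)

lemma rowAdj_iff {x y : Cyl u v} : rowAdj u v x y ↔ y = x + rowStep := by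
  refine ⟨fun ⟨a, hx, hy⟩ => ?_, fun hy => ?_⟩
  · rw [hx, hy, rowStep, ← cmk_add, Prod.mk_add_mk, add_zero]
  · obtain ⟨a, rfl⟩ := QuotientAddGroup.mk_surjective x
    exact ⟨a, rfl, by rw [hy]; exact congrArg (cmk u v) (Prod.ext rfl (add_zero a.2))⟩

lemma colAdj_iff {x y : Cyl u v} : colAdj u v x y ↔ y = x + colStep := by
  refine ⟨fun ⟨a, hx, hy⟩ => ?_, fun hy => ?_⟩
  · rw [hx, hy, colStep, ← cmk_add, Prod.mk_add_mk, add_zero]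
  · obtain ⟨a, rfl⟩ := QuotientAddGroup.mk_surjective x
    exact ⟨a, rfl, by rw [hy]; exact congrArg (cmk u v) (Prod.ext (add_zero a.1) rfl)⟩

lemma cle_add_cmk (x : Cyl u v) {a b : ℤ} (ha : 0 ≤ a) (hb : 0 ≤ b) :
    cle u v x (x + cmk u v (a, b)) := by
  obtain ⟨c, rfl⟩ := QuotientAddGroup.mk_surjective x
  exact ⟨c, c + (a, b), rfl, rfl, by simpa using ha, by simpa using hb⟩

lemma cle_add_zsmul_rowStep (x : Cyl u v) {k : ℤ} (hk : 0 ≤ k) :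
    cle u v x (x + k • rowStep) := by
  rw [zsmul_rowStep]
  exact cle_add_cmk x hk le_rfl

lemma cle_add_rowStep (x : Cyl u v) : cle u v x (x + rowStep) := by
  simpa using cle_add_zsmul_rowStep x zero_le_one

lemma cle_add_colStep (x : Cyl u v) : cle u v x (x + colStep) :=
  cle_add_cmk x le_rfl zero_le_one

lemma ncard_eq_of_ncard_row_eq (hv : 0 < v) {A B : Set (Cyl u v)} (hA : A.Finite)
    (hB : B.Finite)
    (h : ∀ x, {k : ℤ | x + k • rowStep ∈ A}.ncard = {k : ℤ | x + k • rowStep ∈ B}.ncard) :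
    A.ncard = B.ncard := by
  let H := AddSubgroup.zmultiples (rowStep : Cyl u v)
  refine ncard_eq_of_ncard_inter_preimage_eq (QuotientAddGroup.mk : Cyl u v → Cyl u v ⧸ H)
    hA hB fun y => ?_
  obtain ⟨x, rfl⟩ := QuotientAddGroup.mk_surjective y
  have hrow : ∀ S : Set (Cyl u v), (S ∩ QuotientAddGroup.mk ⁻¹' {(x : Cyl u v ⧸ H)}).ncard =
      {k : ℤ | x + k • rowStep ∈ S}.ncard := by
    intro S
    have hfib : QuotientAddGroup.mk ⁻¹' {(x : Cyl u v ⧸ H)} =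
        Set.range fun k : ℤ => x + k • rowStep := by
      ext z
      simp only [H, Set.mem_preimage, Set.mem_singleton_iff, QuotientAddGroup.eq,
        AddSubgroup.mem_zmultiples_iff, eq_neg_add_iff_add_eq, Set.mem_range]
      constructor <;> rintro ⟨k, hk⟩ <;> exact ⟨-k, by rw [← hk, neg_zsmul]; abel⟩
    rw [hfib, ← Set.image_preimage_eq_inter_range, Set.ncard_image_of_injective _
      (add_zsmul_rowStep_injective hv x)]
    rfl
  exact (hrow A).trans ((h x).trans (hrow B).symm)

variable {C : Set (Cyl u v)}

lemma IsCylShape.add_rowStep_mem (hC : IsCylShape u v C) {x : Cyl u v} (hx : x ∈ C)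
    (h : x + rowStep + colStep ∈ C) : x + rowStep ∈ C :=
  hC.2 _ _ _ (cle_add_rowStep x) (cle_add_colStep _) hx h

lemma IsCylShape.add_colStep_mem (hC : IsCylShape u v C) {x : Cyl u v} (hx : x ∈ C)
    (h : x + rowStep + colStep ∈ C) : x + colStep ∈ C :=
  hC.2 _ _ _ (cle_add_colStep x) (add_right_comm x rowStep colStep ▸ cle_add_rowStep _) hx h

lemma IsCylShape.add_zsmul_rowStep_mem (hC : IsCylShape u v C) {x : Cyl u v} (hx : x ∈ C)
    {k : ℤ} (hk : 0 ≤ k) (h : x + (k + 1) • rowStep ∈ C) : x + k • rowStep ∈ C :=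
  hC.2 _ _ _ (cle_add_zsmul_rowStep x hk)
    (by rw [add_one_zsmul, ← add_assoc]; exact cle_add_rowStep _) hx h

variable {T : Cyl u v → ℕ}

lemma CylOk.le_add_rowStep (hT : CylOk u v C T) {x : Cyl u v} (hx : x ∈ C)
    (h : x + rowStep ∈ C) : T x ≤ T (x + rowStep) :=
  hT.1 _ _ hx h (rowAdj_iff.2 rfl)

lemma CylOk.lt_add_colStep (hT : CylOk u v C T) {x : Cyl u v} (hx : x ∈ C)
    (h : x + colStep ∈ C) : T x < T (x + colStep) :=
  hT.2 _ _ hx h (colAdj_iff.2 rfl)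

lemma CylOk.le_add_zsmul_rowStep (hC : IsCylShape u v C) (hT : CylOk u v C T) {x : Cyl u v}
    (hx : x ∈ C) {k : ℤ} (hk : 0 ≤ k) (h : x + k • rowStep ∈ C) :
    T x ≤ T (x + k • rowStep) := by
  induction k, hk using Int.leInduction with
  | base => simp
  | succ k hk ih =>
    have hk' := IsCylShape.add_zsmul_rowStep_mem hC hx hk h
    rw [add_one_zsmul, ← add_assoc] at h ⊢
    exact (ih hk').trans (CylOk.le_add_rowStep hT hk' h)

end Cylinder

section BenderKnuth

variable {u v : ℕ} (C : Set (Cyl u v)) (i : ℕ) (T : Cyl u v → ℕ)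

def IsLowerOfPair (x : Cyl u v) : Prop :=
  x ∈ C ∧ T x = i ∧ x + colStep ∈ C ∧ T (x + colStep) = i + 1

def IsUpperOfPair (x : Cyl u v) : Prop :=
  x ∈ C ∧ T x = i + 1 ∧ x - colStep ∈ C ∧ T (x - colStep) = i

def IsFree (x : Cyl u v) : Prop :=
  x ∈ C ∧ (T x = i ∨ T x = i + 1) ∧ ¬ IsLowerOfPair C i T x ∧ ¬ IsUpperOfPair C i T x

def freeIdx (x : Cyl u v) : Set ℤ := {k | IsFree C i T (x + k • rowStep)}

def freeLowIdx (x : Cyl u v) : Set ℤ := {k | k ∈ freeIdx C i T x ∧ T (x + k • rowStep) = i}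

def freeHighIdx (x : Cyl u v) : Set ℤ :=
  {k | k ∈ freeIdx C i T x ∧ T (x + k • rowStep) = i + 1}

/-- The Bender–Knuth move exchanging the entries `i` and `i + 1`. Since `v > 0`, the row
`x + ℤ • rowStep` is a line, and its free cells read `i^a (i+1)^b` from left to right; they are
refilled as `i^b (i+1)^a`, the free cell of rank `r` in its row getting `i` iff `r < b`. -/
def benderKnuth (x : Cyl u v) : ℕ :=
  if IsFree C i T x then
    if rankIn (freeIdx C i T x) 0 < (freeHighIdx C i T x).ncard then i else i + 1
  else T x

variable {C i T}

lemma benderKnuth_of_not_isFree {x : Cyl u v} (h : ¬ IsFree C i T x) :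
    benderKnuth C i T x = T x :=
  if_neg h

lemma benderKnuth_of_notMem {x : Cyl u v} (h : x ∉ C) : benderKnuth C i T x = T x :=
  benderKnuth_of_not_isFree fun hf => h hf.1

lemma IsFree.benderKnuth_eq_iff {x : Cyl u v} (h : IsFree C i T x) :
    benderKnuth C i T x = i ↔ rankIn (freeIdx C i T x) 0 < (freeHighIdx C i T x).ncard := by
  rw [benderKnuth, if_pos h]
  split_ifs with hr <;> simp [hr]

lemma IsFree.benderKnuth_eq_or {x : Cyl u v} (h : IsFree C i T x) :
    benderKnuth C i T x = i ∨ benderKnuth C i T x = i + 1 := by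
  rw [benderKnuth, if_pos h]
  split_ifs <;> simp

lemma IsLowerOfPair.not_isFree {x : Cyl u v} (h : IsLowerOfPair C i T x) : ¬ IsFree C i T x :=
  fun hf => hf.2.2.1 h

lemma IsUpperOfPair.not_isFree {x : Cyl u v} (h : IsUpperOfPair C i T x) : ¬ IsFree C i T x :=
  fun hf => hf.2.2.2 h

lemma isLowerOfPair_of_not_isFree {x : Cyl u v} (hx : x ∈ C) (hTx : T x = i)
    (h : ¬ IsFree C i T x) : IsLowerOfPair C i T x := by
  by_contra hl
  exact h ⟨hx, Or.inl hTx, hl, fun hu => Nat.succ_ne_self i (hu.2.1.symm.trans hTx)⟩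

lemma isUpperOfPair_of_not_isFree {x : Cyl u v} (hx : x ∈ C) (hTx : T x = i + 1)
    (h : ¬ IsFree C i T x) : IsUpperOfPair C i T x := by
  by_contra hu
  exact h ⟨hx, Or.inr hTx, fun hl => Nat.succ_ne_self i (hTx.symm.trans hl.2.1), hu⟩

lemma isUpperOfPair_iff_isLowerOfPair_sub {x : Cyl u v} :
    IsUpperOfPair C i T x ↔ IsLowerOfPair C i T (x - colStep) := by
  rw [IsUpperOfPair, IsLowerOfPair, sub_add_cancel]
  tauto

lemma IsLowerOfPair.benderKnuth {x : Cyl u v} (h : IsLowerOfPair C i T x) :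
    IsLowerOfPair C i (benderKnuth C i T) x := by
  have hup : IsUpperOfPair C i T (x + colStep) := by
    rwa [isUpperOfPair_iff_isLowerOfPair_sub, add_sub_cancel_right]
  rw [IsLowerOfPair, benderKnuth_of_not_isFree h.not_isFree,
    benderKnuth_of_not_isFree hup.not_isFree]
  exact h

lemma IsUpperOfPair.benderKnuth {x : Cyl u v} (h : IsUpperOfPair C i T x) :
    IsUpperOfPair C i (benderKnuth C i T) x := by
  rw [isUpperOfPair_iff_isLowerOfPair_sub] at h ⊢
  exact h.benderKnuth

lemma IsFree.lt_add_colStep (hT : CylOk u v C T) {x : Cyl u v} (h : IsFree C i T x)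
    (hup : x + colStep ∈ C) : i + 1 < T (x + colStep) := by
  have hlt := CylOk.lt_add_colStep hT h.1 hup
  have hTx := h.2.1
  have hne : T (x + colStep) ≠ i + 1 := fun he => h.2.2.1 ⟨h.1, by omega, hup, he⟩
  omega

lemma IsFree.sub_colStep_lt (hT : CylOk u v C T) {x : Cyl u v} (h : IsFree C i T x)
    (hdn : x - colStep ∈ C) : T (x - colStep) < i := by
  have hlt := CylOk.lt_add_colStep hT hdn (by rw [sub_add_cancel]; exact h.1)
  rw [sub_add_cancel] at hlt
  have hTx := h.2.1
  have hne : T (x - colStep) ≠ i := fun he => h.2.2.2 ⟨h.1, by omega, hdn, he⟩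
  omega

lemma IsFree.lt_add_rowStep (hC : IsCylShape u v C) (hT : CylOk u v C T) {x : Cyl u v}
    (h : IsFree C i T x) (hr : x + rowStep ∈ C) (hr' : ¬ IsFree C i T (x + rowStep)) :
    i < T (x + rowStep) := by
  have hle := CylOk.le_add_rowStep hT h.1 hr
  have hTx := h.2.1
  by_contra! hge
  have hx : T x = i := by omega
  -- the pair above `x + rowStep` forces one above `x`
  obtain ⟨-, -, hrc, hrcT⟩ := isLowerOfPair_of_not_isFree hr (by omega) hr'
  have hc := IsCylShape.add_colStep_mem hC h.1 hrc
  have h1 := CylOk.lt_add_colStep hT h.1 hc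
  have h2 := CylOk.le_add_rowStep hT hc (by rwa [add_right_comm])
  rw [add_right_comm, hrcT] at h2
  exact h.2.2.1 ⟨h.1, hx, hc, by omega⟩

lemma IsFree.sub_rowStep_le (hC : IsCylShape u v C) (hT : CylOk u v C T) {x : Cyl u v}
    (h : IsFree C i T (x + rowStep)) (hx : x ∈ C) (hx' : ¬ IsFree C i T x) : T x ≤ i := by
  have hle := CylOk.le_add_rowStep hT hx h.1
  have hTx := h.2.1
  by_contra! hgt
  -- the pair below `x` forces one below `x + rowStep`
  obtain ⟨-, -, hdn, hdnT⟩ := isUpperOfPair_of_not_isFree hx (by omega) hx'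
  have hdn' : x - colStep + rowStep + colStep ∈ C := by
    rw [add_right_comm, sub_add_cancel]
    exact h.1
  have hr := IsCylShape.add_rowStep_mem hC hdn hdn'
  have h1 := CylOk.le_add_rowStep hT hdn hr
  have h2 := CylOk.lt_add_colStep hT hr hdn'
  rw [add_right_comm, sub_add_cancel] at h2
  refine h.2.2.2 ⟨h.1, by omega, by rwa [← sub_add_eq_add_sub], ?_⟩
  rw [← sub_add_eq_add_sub]
  omega

lemma freeIdx_add_zsmul (x : Cyl u v) (d : ℤ) :
    freeIdx C i T (x + d • rowStep) = (d + ·) ⁻¹' freeIdx C i T x := by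
  ext k
  change IsFree C i T (x + d • rowStep + k • rowStep) ↔ IsFree C i T (x + (d + k) • rowStep)
  rw [add_zsmul, add_assoc]

lemma freeHighIdx_add_zsmul (x : Cyl u v) (d : ℤ) :
    freeHighIdx C i T (x + d • rowStep) = (d + ·) ⁻¹' freeHighIdx C i T x := by
  ext k
  change k ∈ freeIdx C i T (x + d • rowStep) ∧ T (x + d • rowStep + k • rowStep) = i + 1 ↔
    d + k ∈ freeIdx C i T x ∧ T (x + (d + k) • rowStep) = i + 1
  rw [freeIdx_add_zsmul, add_zsmul, add_assoc]
  rfl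

lemma rankIn_freeIdx_add_zsmul (x : Cyl u v) (d : ℤ) :
    rankIn (freeIdx C i T (x + d • rowStep)) 0 = rankIn (freeIdx C i T x) d := by
  rw [freeIdx_add_zsmul, rankIn_preimage_add, add_zero]

lemma ncard_freeHighIdx_add_zsmul (x : Cyl u v) (d : ℤ) :
    (freeHighIdx C i T (x + d • rowStep)).ncard = (freeHighIdx C i T x).ncard := by
  rw [freeHighIdx_add_zsmul, ncard_preimage_add]

lemma freeIdx_finite (hv : 0 < v) (hC : IsCylShape u v C) (x : Cyl u v) :
    (freeIdx C i T x).Finite :=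
  (hC.1.preimage (add_zsmul_rowStep_injective hv x).injOn).subset
    fun _ hk => hk.1

lemma freeIdx_eq_union (x : Cyl u v) :
    freeIdx C i T x = freeLowIdx C i T x ∪ freeHighIdx C i T x := by
  ext k
  refine ⟨fun hk => ?_, fun hk => hk.elim And.left And.left⟩
  rcases hk.2.1 with h | h
  · exact Or.inl ⟨hk, h⟩
  · exact Or.inr ⟨hk, h⟩

lemma ncard_freeIdx (hv : 0 < v) (hC : IsCylShape u v C) (x : Cyl u v) :
    (freeIdx C i T x).ncard = (freeLowIdx C i T x).ncard + (freeHighIdx C i T x).ncard := by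
  have hfin := freeIdx_finite (i := i) (T := T) hv hC x
  rw [freeIdx_eq_union] at hfin ⊢
  refine Set.ncard_union_eq ?_ (hfin.subset Set.subset_union_left)
    (hfin.subset Set.subset_union_right)
  rw [Set.disjoint_left]
  rintro k ⟨-, hi⟩ ⟨-, hi'⟩
  omega

lemma freeLowIdx_lt_freeHighIdx (hC : IsCylShape u v C) (hT : CylOk u v C T) (x : Cyl u v) :
    ∀ k ∈ freeLowIdx C i T x, ∀ k' ∈ freeHighIdx C i T x, k < k' := by
  rintro k ⟨hk, hkT⟩ k' ⟨hk', hk'T⟩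
  by_contra! hle
  have hmono := CylOk.le_add_zsmul_rowStep hC hT hk'.1 (sub_nonneg.2 hle)
    (by rw [add_assoc, ← add_zsmul, add_sub_cancel]; exact hk.1)
  rw [add_assoc, ← add_zsmul, add_sub_cancel, hkT, hk'T] at hmono
  omega

lemma benderKnuth_lt_add_colStep (hT : CylOk u v C T) {x : Cyl u v} (hx : x ∈ C)
    (hup : x + colStep ∈ C) : benderKnuth C i T x < benderKnuth C i T (x + colStep) := by
  by_cases h1 : IsFree C i T x <;> by_cases h2 : IsFree C i T (x + colStep)
  · have := h1.lt_add_colStep hT hup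
    have := h2.2.1
    omega
  · rw [benderKnuth_of_not_isFree h2]
    have := h1.lt_add_colStep hT hup
    have := h1.benderKnuth_eq_or
    omega
  · rw [benderKnuth_of_not_isFree h1]
    have := h2.sub_colStep_lt hT (by rwa [add_sub_cancel_right])
    rw [add_sub_cancel_right] at this
    have := h2.benderKnuth_eq_or
    omega
  · rw [benderKnuth_of_not_isFree h1, benderKnuth_of_not_isFree h2]
    exact CylOk.lt_add_colStep hT hx hup

lemma benderKnuth_le_add_rowStep (hv : 0 < v) (hC : IsCylShape u v C) (hT : CylOk u v C T)
    {x : Cyl u v} (hx : x ∈ C) (hr : x + rowStep ∈ C) :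
    benderKnuth C i T x ≤ benderKnuth C i T (x + rowStep) := by
  by_cases h1 : IsFree C i T x <;> by_cases h2 : IsFree C i T (x + rowStep)
  · have hrank : rankIn (freeIdx C i T x) 0 < rankIn (freeIdx C i T (x + rowStep)) 0 := by
      rw [← one_zsmul rowStep, rankIn_freeIdx_add_zsmul]
      exact rankIn_lt_rankIn (freeIdx_finite hv hC x) (by simpa [freeIdx] using h1) one_pos
    have hhigh : (freeHighIdx C i T (x + rowStep)).ncard = (freeHighIdx C i T x).ncard := by
      rw [← one_zsmul rowStep, ncard_freeHighIdx_add_zsmul]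
    have hiff1 := h1.benderKnuth_eq_iff
    have hiff2 := h2.benderKnuth_eq_iff
    rw [hhigh] at hiff2
    rcases h1.benderKnuth_eq_or with h | h <;> rcases h2.benderKnuth_eq_or with h' | h'
    · omega
    · omega
    · exact absurd (hiff1.2 (hrank.trans (hiff2.1 h'))) (by omega)
    · omega
  · rw [benderKnuth_of_not_isFree h2]
    have := h1.lt_add_rowStep hC hT hr h2
    have := h1.benderKnuth_eq_or
    omega
  · rw [benderKnuth_of_not_isFree h1]
    have := h2.sub_rowStep_le hC hT hx h1
    have := h2.benderKnuth_eq_or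
    omega
  · rw [benderKnuth_of_not_isFree h1, benderKnuth_of_not_isFree h2]
    exact CylOk.le_add_rowStep hT hx hr

lemma cylOk_benderKnuth (hv : 0 < v) (hC : IsCylShape u v C) (hT : CylOk u v C T) :
    CylOk u v C (benderKnuth C i T) := by
  refine ⟨fun x y hx hy hxy => ?_, fun x y hx hy hxy => ?_⟩
  · rw [rowAdj_iff] at hxy
    subst hxy
    exact benderKnuth_le_add_rowStep hv hC hT hx hy
  · rw [colAdj_iff] at hxy
    subst hxy
    exact benderKnuth_lt_add_colStep hT hx hy

lemma isFree_benderKnuth_iff (hT : CylOk u v C T) {x : Cyl u v} :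
    IsFree C i (benderKnuth C i T) x ↔ IsFree C i T x := by
  refine ⟨fun h => ?_, fun h => ⟨h.1, h.benderKnuth_eq_or, fun hl => ?_, fun hu => ?_⟩⟩
  · by_contra hf
    rw [IsFree, benderKnuth_of_not_isFree hf] at h
    rcases h.2.1 with hx | hx
    · exact h.2.2.1 (isLowerOfPair_of_not_isFree h.1 hx hf).benderKnuth
    · exact h.2.2.2 (isUpperOfPair_of_not_isFree h.1 hx hf).benderKnuth
  · obtain ⟨-, -, hup, hupT⟩ := hl
    have hlt := h.lt_add_colStep hT hup
    have hnf : ¬ IsFree C i T (x + colStep) := fun hf => by have := hf.2.1; omega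
    rw [benderKnuth_of_not_isFree hnf] at hupT
    omega
  · obtain ⟨-, -, hdn, hdnT⟩ := hu
    have hlt := h.sub_colStep_lt hT hdn
    have hnf : ¬ IsFree C i T (x - colStep) := fun hf => by have := hf.2.1; omega
    rw [benderKnuth_of_not_isFree hnf] at hdnT
    omega

lemma freeIdx_benderKnuth (hT : CylOk u v C T) (x : Cyl u v) :
    freeIdx C i (benderKnuth C i T) x = freeIdx C i T x :=
  Set.ext fun _ => isFree_benderKnuth_iff hT

lemma ncard_freeHighIdx_benderKnuth (hv : 0 < v) (hC : IsCylShape u v C) (hT : CylOk u v C T)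
    (x : Cyl u v) :
    (freeHighIdx C i (benderKnuth C i T) x).ncard = (freeLowIdx C i T x).ncard := by
  have hfin := freeIdx_finite (i := i) (T := T) hv hC x
  have hhigh : freeHighIdx C i (benderKnuth C i T) x =
      {k | k ∈ freeIdx C i T x ∧ ¬ rankIn (freeIdx C i T x) k < (freeHighIdx C i T x).ncard} := by
    ext k
    change k ∈ freeIdx C i (benderKnuth C i T) x ∧ _ ↔ _
    rw [freeIdx_benderKnuth hT]
    refine and_congr_right fun hk => ?_
    rw [← rankIn_freeIdx_add_zsmul, ← ncard_freeHighIdx_add_zsmul x k, ← hk.benderKnuth_eq_iff]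
    rcases hk.benderKnuth_eq_or with h | h <;> simp [h]
  rw [hhigh, ncard_setOf_not_rankIn_lt hfin (by rw [ncard_freeIdx hv hC]; omega),
    ncard_freeIdx hv hC]
  omega

lemma benderKnuth_benderKnuth (hv : 0 < v) (hC : IsCylShape u v C) (hT : CylOk u v C T) :
    benderKnuth C i (benderKnuth C i T) = T := by
  funext x
  by_cases hf : IsFree C i T x
  · have hf' := (isFree_benderKnuth_iff hT).2 hf
    have h0 : (0 : ℤ) ∈ freeIdx C i T x := by simpa [freeIdx] using hf
    have hlow : T x = i ↔ rankIn (freeIdx C i T x) 0 < (freeLowIdx C i T x).ncard := by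
      rw [← mem_iff_rankIn_lt_ncard (freeIdx_finite hv hC x) (freeIdx_eq_union x)
        (freeLowIdx_lt_freeHighIdx hC hT x) h0]
      simp [freeLowIdx, h0]
    have hiff := hf'.benderKnuth_eq_iff
    rw [freeIdx_benderKnuth hT, ncard_freeHighIdx_benderKnuth hv hC hT, ← hlow] at hiff
    rcases hf.2.1 with h | h <;> rcases hf'.benderKnuth_eq_or with h' | h' <;> simp_all
  · rw [benderKnuth_of_not_isFree ((isFree_benderKnuth_iff hT).not.2 hf),
      benderKnuth_of_not_isFree hf]

end BenderKnuth

section BenderKnuthContent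

variable {u v : ℕ} {C : Set (Cyl u v)} {i : ℕ} {T : Cyl u v → ℕ}

lemma ncard_setOf_isLowerOfPair_eq :
    {x | IsLowerOfPair C i T x}.ncard = {x | IsUpperOfPair C i T x}.ncard := by
  have h : {x | IsUpperOfPair C i T x} = (· - colStep) ⁻¹' {x | IsLowerOfPair C i T x} :=
    Set.ext fun _ => isUpperOfPair_iff_isLowerOfPair_sub
  rw [h, Set.ncard_preimage_of_injective_subset_range (sub_left_injective (b := colStep))
    fun y _ => ⟨y + colStep, add_sub_cancel_right y colStep⟩]

/-- Row by row, `b` free cells are refilled with `i` and `b` free cells carried `i + 1`. -/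
lemma ncard_setOf_isFree_rankIn_lt (hv : 0 < v) (hC : IsCylShape u v C) :
    {x | IsFree C i T x ∧ rankIn (freeIdx C i T x) 0 < (freeHighIdx C i T x).ncard}.ncard =
      {x | IsFree C i T x ∧ T x = i + 1}.ncard := by
  refine ncard_eq_of_ncard_row_eq hv (hC.1.subset fun _ hx => hx.1.1)
    (hC.1.subset fun _ hx => hx.1.1) fun x => ?_
  change {k | IsFree C i T (x + k • rowStep) ∧ _}.ncard = (freeHighIdx C i T x).ncard
  simp only [rankIn_freeIdx_add_zsmul, ncard_freeHighIdx_add_zsmul]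
  exact ncard_setOf_rankIn_lt (freeIdx_finite hv hC x) (by rw [ncard_freeIdx hv hC]; omega)

lemma ncard_setOf_benderKnuth_eq (hv : 0 < v) (hC : IsCylShape u v C) :
    {x | x ∈ C ∧ benderKnuth C i T x = i}.ncard = {x | x ∈ C ∧ T x = i + 1}.ncard := by
  have hlow : {x | x ∈ C ∧ benderKnuth C i T x = i} = {x | IsLowerOfPair C i T x} ∪
      {x | IsFree C i T x ∧ rankIn (freeIdx C i T x) 0 < (freeHighIdx C i T x).ncard} := by
    ext x
    refine ⟨fun ⟨hx, hbk⟩ => ?_, ?_⟩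
    · by_cases hf : IsFree C i T x
      · exact Or.inr ⟨hf, hf.benderKnuth_eq_iff.1 hbk⟩
      · rw [benderKnuth_of_not_isFree hf] at hbk
        exact Or.inl (isLowerOfPair_of_not_isFree hx hbk hf)
    · rintro (hl | ⟨hf, hr⟩)
      · exact ⟨hl.1, (benderKnuth_of_not_isFree hl.not_isFree).trans hl.2.1⟩
      · exact ⟨hf.1, hf.benderKnuth_eq_iff.2 hr⟩
  have hhigh : {x | x ∈ C ∧ T x = i + 1} =
      {x | IsUpperOfPair C i T x} ∪ {x | IsFree C i T x ∧ T x = i + 1} := by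
    ext x
    refine ⟨fun ⟨hx, hTx⟩ => ?_, ?_⟩
    · by_cases hf : IsFree C i T x
      · exact Or.inr ⟨hf, hTx⟩
      · exact Or.inl (isUpperOfPair_of_not_isFree hx hTx hf)
    · rintro (hu | ⟨hf, hTx⟩)
      · exact ⟨hu.1, hu.2.1⟩
      · exact ⟨hf.1, hTx⟩
  rw [hlow, hhigh,
    Set.ncard_union_eq (Set.disjoint_left.2 fun _ hl hf => hl.not_isFree hf.1)
      (hC.1.subset fun _ hx => hx.1) (hC.1.subset fun _ hx => hx.1.1),
    Set.ncard_union_eq (Set.disjoint_left.2 fun _ hu hf => hu.not_isFree hf.1)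
      (hC.1.subset fun _ hx => hx.1) (hC.1.subset fun _ hx => hx.1.1),
    ncard_setOf_isLowerOfPair_eq, ncard_setOf_isFree_rankIn_lt hv hC]

lemma card_benderKnuth_eq (hv : 0 < v) (hC : IsCylShape u v C) (hT : CylOk u v C T) (w : ℕ) :
    Nat.card {x // x ∈ C ∧ benderKnuth C i T x = w} =
      Nat.card {x // x ∈ C ∧ T x = Equiv.swap i (i + 1) w} := by
  change Set.ncard {x | _} = Set.ncard {x | _}
  rcases eq_or_ne w i with rfl | hi
  · rw [Equiv.swap_apply_left]
    exact ncard_setOf_benderKnuth_eq hv hC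
  rcases eq_or_ne w (i + 1) with rfl | hi1
  · rw [Equiv.swap_apply_right]
    have := ncard_setOf_benderKnuth_eq hv hC (T := benderKnuth C i T) (i := i)
    rw [benderKnuth_benderKnuth hv hC hT] at this
    exact this.symm
  rw [Equiv.swap_apply_of_ne_of_ne hi hi1]
  congr 1
  ext x
  refine and_congr_right fun _ => ?_
  by_cases hf : IsFree C i T x
  · rcases hf.benderKnuth_eq_or with h | h <;> rcases hf.2.1 with h' | h' <;> omega
  · rw [benderKnuth_of_not_isFree hf]

lemma swap_add_one_mem_permStabilizer_cylSchur {u v : ℕ} (hv : 0 < v) {C : Set (Cyl u v)}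
    (hC : IsCylShape u v C) (i : ℕ) :
    Equiv.swap i (i + 1) ∈ permStabilizer (cylSchur u v C) :=
  mem_permStabilizer_tabSeries (Equiv.swap_apply_self i (i + 1)) (benderKnuth C i)
    (fun _ hT => cylOk_benderKnuth hv hC hT) (fun _ hT => benderKnuth_benderKnuth hv hC hT)
    (fun _ _ _ hx => benderKnuth_of_notMem hx) (fun _ hT => card_benderKnuth_eq hv hC hT)

end BenderKnuthContent

end CylindricSchur

theorem stmt4_general (u v : ℕ) (hv : 0 < v) (C : Set (Cyl u v))
    (hC : IsCylShape u v C) (g : Equiv.Perm ℕ) (e : ℕ →₀ ℕ) :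
    MvPowerSeries.coeff (Finsupp.equivMapDomain g e) (cylSchur u v C) =
      MvPowerSeries.coeff e (cylSchur u v C) := by
  obtain ⟨σ, hσ, hσg⟩ := CylindricSchur.exists_mem_eqOn_of_forall_swap_mem
    (CylindricSchur.swap_mem_of_forall_swap_add_one_mem
      (CylindricSchur.swap_add_one_mem_permStabilizer_cylSchur hv hC))
    e.support g
  rw [Finsupp.equivMapDomain_eq_mapDomain, ← Finsupp.mapDomain_congr hσg,
    ← Finsupp.equivMapDomain_eq_mapDomain]
  exact hσ e

/-- For any cylindric skew shape `C`, the cylindric skew Schur function `s_C(x)` is a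
symmetric function: its coefficients are invariant under any permutation of the variables. -/
theorem stmt4 (u v : ℕ) (hu : 0 < u) (hv : 0 < v) (C : Set (Cyl u v))
    (hC : IsCylShape u v C) (g : Equiv.Perm ℕ) (e : ℕ →₀ ℕ) :
    MvPowerSeries.coeff (Finsupp.equivMapDomain g e) (cylSchur u v C) =
      MvPowerSeries.coeff e (cylSchur u v C) :=
  stmt4_general u v hv C hC g e
end
end

section
/- The cylindric skew Schur function of the cylindric hook H^{n-k}_k satisfies s_{H^{n-k}_k} = Σ_{j=0}^{n-k-1} (-1)^j s_{(n-k-j, 1^{k+j})}, i.e., s_{(n-k,1^k)} - s_{(n-k-1,1^{k+1})} + ... + (-1)^{n-k-1} s_{(1^n)}, an alternating sum of hook Schur functions. -/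
open scoped Classical
open Relation

noncomputable section

/-- Edgewise adjacency in `ℤ × ℤ`. -/
def adjZ (a b : ℤ × ℤ) : Prop :=
  b = (a.1 + 1, a.2) ∨ a = (b.1 + 1, b.2) ∨ b = (a.1, a.2 + 1) ∨ a = (b.1, b.2 + 1)

/-- The full preimage of `C` in `ℤ × ℤ` under the quotient map. -/
def preimg (u v : ℕ) (C : Set (Cyl u v)) : Set (ℤ × ℤ) := {a | cmk u v a ∈ C}

/-- A cylindric ribbon: a cylindric skew shape which, viewed as a subset of `ℤ²`,
is edgewise connected and contains no `2 × 2` block of boxes. -/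
def IsCylRibbon (u v : ℕ) (C : Set (Cyl u v)) : Prop :=
  IsCylShape u v C ∧ C.Nonempty ∧
  (∀ a b, a ∈ preimg u v C → b ∈ preimg u v C →
    Relation.ReflTransGen (fun p q => q ∈ preimg u v C ∧ adjZ p q) a b) ∧
  ¬ ∃ a : ℤ × ℤ, a ∈ preimg u v C ∧ (a.1 + 1, a.2) ∈ preimg u v C ∧
      (a.1, a.2 + 1) ∈ preimg u v C ∧ (a.1 + 1, a.2 + 1) ∈ preimg u v C

/-- The hook partition `(a, 1^b)`. -/
def hookFun (a b : ℕ) : ℕ → ℕ := fun i => if i = 0 then a else if i ≤ b then 1 else 0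


/-!
Write `u = n - k`, `v = k` and place the least element of the ribbon at `w`. Every box of the
preimage in `ℤ²` then lies weakly north-east of a translate `w + t • (-u, v)`, and since by
convexity a ribbon has no two boxes `a ≤ b` with `a.1 < b.1` and `a.2 < b.2`, it lies on the arm
`w + [0, u] × {0}` or on the leg `w + {0} × [0, v]` of such a translate. Connectedness forces the
arm to reach length `u`, where it meets the leg of the next translate: the ribbon is the hook
`(u, 1^v)` in which the last arm cell `(0, u - 1)` is followed in its row by the bottom leg cell
`(v, 0)`. Its tableaux are the hook tableaux with `T (0, u - 1) ≤ T (v, 0)`. Among all tableaux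
of the hook `(a, 1^b)`, those violating this condition become, after moving their last arm cell
to the bottom of the leg, exactly the wrapped tableaux of `(a - 1, 1^(b + 1))`; the resulting
recursion telescopes into the alternating sum.
-/

section TabSeries

variable {X Y : Type} {S : Set X} {S' : Set Y}

def tabFiber (S : Set X) (Ok : (X → ℕ) → Prop) (e : ℕ →₀ ℕ) : Set (X → ℕ) :=
  {T | Ok T ∧ (∀ x, x ∉ S → T x = 0) ∧ ∀ v, Nat.card {x : X // x ∈ S ∧ T x = v} = e v}

lemma coeff_tabSeries (Ok : (X → ℕ) → Prop) (e : ℕ →₀ ℕ) :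
    MvPowerSeries.coeff e (tabSeries S Ok) = Nat.card (tabFiber S Ok e) :=
  rfl

lemma card_eq_of_bijOn {f : X → Y} (hf : S.BijOn f S') {T : X → ℕ} {T' : Y → ℕ}
    (hT : S.EqOn T (T' ∘ f)) (v : ℕ) :
    Nat.card {x : X // x ∈ S ∧ T x = v} = Nat.card {y : Y // y ∈ S' ∧ T' y = v} := by
  refine Nat.card_congr (Set.BijOn.equiv f ⟨fun x hx => ⟨hf.mapsTo hx.1, (hT hx.1).symm.trans hx.2⟩,
    hf.injOn.mono fun x hx => hx.1, fun y hy => ?_⟩)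
  obtain ⟨x, hx, rfl⟩ := hf.surjOn hy.1
  exact ⟨x, ⟨hx, (hT hx).trans hy.2⟩, rfl⟩

theorem tabSeries_eq_of_bijOn {Ok : (X → ℕ) → Prop} {Ok' : (Y → ℕ) → Prop} (f : X → Y)
    (hf : S.BijOn f S') (hOk : ∀ T T', S.EqOn T (T' ∘ f) → (Ok T ↔ Ok' T')) :
    tabSeries S Ok = tabSeries S' Ok' := by
  refine MvPowerSeries.ext fun e => ?_
  rw [coeff_tabSeries, coeff_tabSeries, Nat.cast_inj]
  have hmem : ∀ T T', S.EqOn T (T' ∘ f) → (∀ x ∉ S, T x = 0) → (∀ y ∉ S', T' y = 0) →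
      (T ∈ tabFiber S Ok e ↔ T' ∈ tabFiber S' Ok' e) := by
    intro T T' h hT hT'
    simp only [tabFiber, Set.mem_ofPred_eq, hOk T T' h, card_eq_of_bijOn hf h]
    tauto
  let pull (T' : tabFiber S' Ok' e) : tabFiber S Ok e :=
    ⟨S.indicator (T'.1 ∘ f), (hmem _ _ (fun x hx => Set.indicator_of_mem hx _)
      (fun x hx => Set.indicator_of_notMem hx _) T'.2.2.1).2 T'.2⟩
  refine (Nat.card_eq_of_bijective pull ⟨fun T₁ T₂ h => Subtype.ext (funext fun y => ?_), ?_⟩).symm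
  · by_cases hy : y ∈ S'
    · obtain ⟨x, hx, rfl⟩ := hf.surjOn hy
      simpa [pull, Set.indicator_of_mem hx] using congrFun (congrArg Subtype.val h) x
    · rw [T₁.2.2.1 y hy, T₂.2.2.1 y hy]
  · intro T
    choose g hgS hfg using hf.surjOn
    let T' y := if hy : y ∈ S' then T.1 (g hy) else 0
    have hEq : S.EqOn T.1 (T' ∘ f) := fun x hx => by
      simp [T', hf.mapsTo hx, hf.injOn (hgS _) hx (hfg _)]
    refine ⟨⟨T', (hmem _ _ hEq T.2.2.1 fun y hy => dif_neg hy).1 T.2⟩,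
      Subtype.ext (funext fun x => ?_)⟩
    by_cases hx : x ∈ S
    · simp [pull, Set.indicator_of_mem hx, hEq hx]
    · simp [pull, Set.indicator_of_notMem hx, T.2.2.1 x hx]

lemma finite_tabFiber (hS : S.Finite) (Ok : (X → ℕ) → Prop) (e : ℕ →₀ ℕ) :
    (tabFiber S Ok e).Finite := by
  have := hS.to_subtype
  have hpi := Set.Finite.pi (t := fun _ : S => (e.support : Set ℕ)) fun _ => e.support.finite_toSet
  refine Set.Finite.of_finite_image (f := fun T (x : S) => T x) (hpi.subset ?_)
    fun T₁ h₁ T₂ h₂ h => funext fun x => ?_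
  · rintro _ ⟨T, ⟨-, -, hcont⟩, rfl⟩ x -
    have : Finite {x' : X // x' ∈ S ∧ T x' = T x} := (hS.subset fun _ h => h.1).to_subtype
    rw [Finset.mem_coe, Finsupp.mem_support_iff, ← hcont, ← Nat.pos_iff_ne_zero]
    exact Nat.card_pos_iff.2 ⟨⟨x, x.2, rfl⟩, this⟩
  · by_cases hx : x ∈ S
    · exact congrFun h ⟨x, hx⟩
    · rw [h₁.2.1 x hx, h₂.2.1 x hx]

theorem tabSeries_eq_add (hS : S.Finite) (Ok Q : (X → ℕ) → Prop) :
    tabSeries S Ok = tabSeries S (fun T => Ok T ∧ Q T) + tabSeries S (fun T => Ok T ∧ ¬ Q T) := by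
  refine MvPowerSeries.ext fun e => ?_
  have hQ : tabFiber S (fun T => Ok T ∧ Q T) e = tabFiber S Ok e ∩ {T | Q T} := by
    ext; simp only [tabFiber, Set.mem_inter_iff, Set.mem_ofPred_eq]; tauto
  have hnQ : tabFiber S (fun T => Ok T ∧ ¬ Q T) e = tabFiber S Ok e \ {T | Q T} := by
    ext; simp only [tabFiber, Set.mem_sdiff, Set.mem_ofPred_eq]; tauto
  rw [map_add, coeff_tabSeries, coeff_tabSeries, coeff_tabSeries, hQ, hnQ, Nat.card_coe_set_eq,
    Nat.card_coe_set_eq, Nat.card_coe_set_eq, ← Nat.cast_add,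
    Set.ncard_inter_add_ncard_sdiff_eq_ncard _ _ (finite_tabFiber hS Ok e)]

end TabSeries

section Hook

def hookCells (a b : ℕ) : Set (ℕ × ℕ) := cells (hookFun a b)

lemma mem_hookCells {a b : ℕ} {p : ℕ × ℕ} :
    p ∈ hookCells a b ↔ (p.1 = 0 ∧ p.2 < a) ∨ (0 < p.1 ∧ p.1 ≤ b ∧ p.2 = 0) := by
  obtain ⟨r, c⟩ := p
  simp only [hookCells, cells, hookFun, Set.mem_ofPred_eq]
  split_ifs <;> omega

lemma hookCells_finite (a b : ℕ) : (hookCells a b).Finite :=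
  (Set.finite_Iic (b, a)).subset fun p hp => by
    rw [mem_hookCells] at hp
    exact Prod.mk_le_mk.2 ⟨by omega, by omega⟩

def IsHookTableau (a b : ℕ) (T : ℕ × ℕ → ℕ) : Prop :=
  (∀ c, c + 1 < a → T (0, c) ≤ T (0, c + 1)) ∧ ∀ r < b, T (r, 0) < T (r + 1, 0)

lemma rowColOk_hookCells_iff {a b : ℕ} (ha : 0 < a) (T : ℕ × ℕ → ℕ) :
    RowColOk (hookCells a b) T ↔ IsHookTableau a b T := by
  simp only [RowColOk, IsHookTableau, mem_hookCells]
  constructor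
  · rintro ⟨hrow, hcol⟩
    exact ⟨fun c hc => hrow 0 c (by omega) (by omega), fun r hr => hcol r 0 (by omega) (by omega)⟩
  · rintro ⟨harm, hleg⟩
    refine ⟨fun r c h₁ h₂ => ?_, fun r c h₁ h₂ => ?_⟩
    · obtain ⟨rfl, hc⟩ : r = 0 ∧ c + 1 < a := by omega
      exact harm c hc
    · obtain ⟨rfl, hr⟩ : c = 0 ∧ r < b := by omega
      exact hleg r hr

lemma schur_hookFun {a b : ℕ} (ha : 0 < a) :
    schur (hookFun a b) = tabSeries (hookCells a b) (IsHookTableau a b) := by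
  have : cells (fun _ => 0) = ∅ := Set.eq_empty_of_forall_notMem fun _ => Nat.not_lt_zero _
  rw [schur, skewSchur, this, Set.sdiff_empty]
  exact congrArg _ (funext fun T => propext (rowColOk_hookCells_iff ha T))

/-- On the cylinder, the cell to the right of the last arm cell `(0, a - 1)` of the hook is its
bottom leg cell `(b, 0)`. -/
def hookWrapSeries (a b : ℕ) : FPS :=
  tabSeries (hookCells a b) fun T => IsHookTableau a b T ∧ T (0, a - 1) ≤ T (b, 0)

lemma hookWrapSeries_one (b : ℕ) : hookWrapSeries 1 b = schur (hookFun 1 b) := by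
  rw [schur_hookFun one_pos, hookWrapSeries]
  refine congrArg _ (funext fun T => propext ⟨And.left, fun hT => ⟨hT, ?_⟩⟩)
  have hleg : ∀ r ≤ b, T (0, 0) ≤ T (r, 0) := by
    intro r
    induction r with
    | zero => exact fun _ => le_rfl
    | succ r ih => exact fun hr => (ih (by omega)).trans (hT.2 r (by omega)).le
  exact hleg b le_rfl

lemma bijOn_swap_hookCells {a b : ℕ} (ha : 0 < a) :
    (hookCells (a + 1) b).BijOn (Equiv.swap (0, a) (b + 1, 0)) (hookCells a (b + 1)) := by
  refine Equiv.bijOn _ fun ⟨r, c⟩ => ?_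
  simp only [Equiv.swap_apply_def, Prod.mk.injEq, mem_hookCells]
  split_ifs <;> omega

lemma tabSeries_not_wrap_eq_hookWrapSeries {a b : ℕ} (ha : 0 < a) :
    tabSeries (hookCells (a + 1) b) (fun T => IsHookTableau (a + 1) b T ∧ ¬ T (0, a) ≤ T (b, 0)) =
      hookWrapSeries a (b + 1) := by
  refine tabSeries_eq_of_bijOn _ (bijOn_swap_hookCells ha) fun T T' hT => ?_
  have harm : ∀ c < a, T (0, c) = T' (0, c) := fun c hc =>
    (hT (mem_hookCells.2 (by omega))).trans
      (congrArg T' (Equiv.swap_apply_of_ne_of_ne (by simp [hc.ne]) (by simp)))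
  have hleg : ∀ r ≤ b, T (r, 0) = T' (r, 0) := fun r hr =>
    (hT (mem_hookCells.2 (by omega))).trans
      (congrArg T' (Equiv.swap_apply_of_ne_of_ne (by simp [ha.ne])
        (by simpa using (Nat.lt_succ_of_le hr).ne)))
  have hmoved : T (0, a) = T' (b + 1, 0) :=
    (hT (mem_hookCells.2 (by omega))).trans (congrArg T' (Equiv.swap_apply_left _ _))
  simp only [IsHookTableau, not_le]
  constructor
  · rintro ⟨⟨harmT, hlegT⟩, hlt⟩
    refine ⟨⟨fun c hc => ?_, fun r hr => ?_⟩, ?_⟩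
    · rw [← harm c (by omega), ← harm (c + 1) hc]
      exact harmT c (by omega)
    · rcases Nat.lt_succ_iff_lt_or_eq.1 hr with hr | rfl
      · rw [← hleg r hr.le, ← hleg (r + 1) hr]
        exact hlegT r hr
      · rw [← hleg r le_rfl, ← hmoved]
        exact hlt
    · rw [← harm (a - 1) (by omega), ← hmoved]
      simpa [Nat.sub_add_cancel ha] using harmT (a - 1) (by omega)
  · rintro ⟨⟨harm', hleg'⟩, hwrap⟩
    refine ⟨⟨fun c hc => ?_, fun r hr => ?_⟩, ?_⟩
    · rcases Nat.lt_succ_iff_lt_or_eq.1 hc with hc | hc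
      · rw [harm c (by omega), harm (c + 1) hc]
        exact harm' c hc
      · obtain rfl : c = a - 1 := by omega
        rw [harm (a - 1) (by omega), Nat.sub_add_cancel ha, hmoved]
        exact hwrap
    · rw [hleg r hr.le, hleg (r + 1) hr]
      exact hleg' r (by omega)
    · rw [hleg b le_rfl, hmoved]
      exact hleg' b (by omega)

lemma hookWrapSeries_succ {a : ℕ} (ha : 0 < a) (b : ℕ) :
    hookWrapSeries (a + 1) b = schur (hookFun (a + 1) b) - hookWrapSeries a (b + 1) := by
  rw [schur_hookFun a.succ_pos, tabSeries_eq_add (hookCells_finite _ _) _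
    fun T => T (0, a + 1 - 1) ≤ T (b, 0), ← hookWrapSeries, Nat.add_sub_cancel,
    tabSeries_not_wrap_eq_hookWrapSeries ha, add_sub_cancel_right]

theorem hookWrapSeries_eq_sum {a : ℕ} (ha : 0 < a) (b : ℕ) :
    hookWrapSeries a b =
      ∑ j ∈ Finset.range a, ((-1 : ℚ) ^ j) • schur (hookFun (a - j) (b + j)) := by
  induction a, ha using Nat.le_induction generalizing b with
  | base => simp [hookWrapSeries_one]
  | succ a ha ih =>
    rw [hookWrapSeries_succ ha, ih, Finset.sum_range_succ', sub_eq_neg_add,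
      ← Finset.sum_neg_distrib]
    congr 1
    · refine Finset.sum_congr rfl fun j _ => ?_
      rw [pow_succ, mul_neg_one, neg_smul, Nat.add_sub_add_right, add_right_comm, add_assoc]
    · simp

end Hook

section Cylinder

variable {u v : ℕ}

def cylGen (u v : ℕ) : ℤ × ℤ := (-(u : ℤ), (v : ℤ))

@[simp] lemma fst_cylGen : (cylGen u v).1 = -(u : ℤ) := rfl

@[simp] lemma snd_cylGen : (cylGen u v).2 = (v : ℤ) := rfl

lemma add_smul_cylGen (a : ℤ × ℤ) (t : ℤ) :
    a + t • cylGen u v = (a.1 - t * u, a.2 + t * v) := by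
  ext <;> simp [sub_eq_add_neg]

lemma cmk_eq_cmk_iff {a b : ℤ × ℤ} :
    cmk u v a = cmk u v b ↔ ∃ t : ℤ, b = a + t • cylGen u v := by
  simp only [cmk, QuotientAddGroup.eq, AddSubgroup.mem_zmultiples_iff]
  exact exists_congr fun t => by rw [eq_neg_add_iff_add_eq, eq_comm]; rfl

lemma cmk_add_smul (a : ℤ × ℤ) (t : ℤ) : cmk u v (a + t • cylGen u v) = cmk u v a :=
  (cmk_eq_cmk_iff.2 ⟨t, rfl⟩).symm

lemma cmk_surjective : Function.Surjective (cmk u v) := QuotientAddGroup.mk_surjective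

lemma cmk_arm_end_eq_leg_end (w : ℤ × ℤ) :
    cmk u v (w + ((u : ℤ), 0)) = cmk u v (w + (0, (v : ℤ))) :=
  cmk_eq_cmk_iff.2 ⟨1, by ext <;> simp [add_assoc]⟩

lemma cle_cmk_iff {a b : ℤ × ℤ} :
    cle u v (cmk u v a) (cmk u v b) ↔ ∃ t : ℤ, a ≤ b + t • cylGen u v := by
  constructor
  · rintro ⟨a', b', ha, hb, h₁, h₂⟩
    obtain ⟨s, rfl⟩ := cmk_eq_cmk_iff.1 ha
    obtain ⟨t, rfl⟩ := cmk_eq_cmk_iff.1 hb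
    refine ⟨t - s, ?_⟩
    calc a = a + s • cylGen u v - s • cylGen u v := by abel
      _ ≤ b + t • cylGen u v - s • cylGen u v := sub_le_sub_right (Prod.le_def.2 ⟨h₁, h₂⟩) _
      _ = b + (t - s) • cylGen u v := by rw [sub_smul]; abel
  · rintro ⟨t, h⟩
    exact ⟨a, b + t • cylGen u v, rfl, (cmk_add_smul b t).symm, h.1, h.2⟩

lemma cle_refl (x : Cyl u v) : cle u v x x := by
  obtain ⟨a, rfl⟩ := cmk_surjective x
  exact cle_cmk_iff.2 ⟨0, by simp⟩

lemma cle_trans {x y z : Cyl u v} (hxy : cle u v x y) (hyz : cle u v y z) : cle u v x z := by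
  obtain ⟨a, rfl⟩ := cmk_surjective x
  obtain ⟨b, rfl⟩ := cmk_surjective y
  obtain ⟨c, rfl⟩ := cmk_surjective z
  obtain ⟨s, hs⟩ := cle_cmk_iff.1 hxy
  obtain ⟨t, ht⟩ := cle_cmk_iff.1 hyz
  refine cle_cmk_iff.2 ⟨t + s, hs.trans ?_⟩
  calc b + s • cylGen u v ≤ c + t • cylGen u v + s • cylGen u v := add_le_add ht le_rfl
    _ = c + (t + s) • cylGen u v := by rw [add_smul, add_assoc]

lemma cle_antisymm (hu : 0 < u) (hv : 0 < v) {x y : Cyl u v} (hxy : cle u v x y)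
    (hyx : cle u v y x) : x = y := by
  obtain ⟨a, rfl⟩ := cmk_surjective x
  obtain ⟨b, rfl⟩ := cmk_surjective y
  obtain ⟨t, ht₁, ht₂⟩ := cle_cmk_iff.1 hxy
  obtain ⟨s, hs₁, hs₂⟩ := cle_cmk_iff.1 hyx
  simp only [add_smul_cylGen] at ht₁ ht₂ hs₁ hs₂
  have hts : t + s = 0 := by nlinarith
  refine cmk_eq_cmk_iff.2 ⟨-t, ?_⟩
  rw [add_smul_cylGen]
  ext <;> dsimp only <;> nlinarith

lemma exists_least_of_existsUnique_minimal (hu : 0 < u) (hv : 0 < v) {C : Set (Cyl u v)}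
    (hC : C.Finite) (hmin : ∃! m, m ∈ C ∧ ∀ x ∈ C, cle u v x m → x = m) :
    ∃ m ∈ C, ∀ x ∈ C, cle u v m x := by
  let _ : PartialOrder (Cyl u v) :=
    { le := cle u v
      le_refl := cle_refl
      le_trans := fun _ _ _ => cle_trans
      le_antisymm := fun _ _ => cle_antisymm hu hv }
  obtain ⟨m, ⟨hmC, -⟩, hm⟩ := hmin
  refine ⟨m, hmC, fun x hx => ?_⟩
  obtain ⟨b, hbx, hb⟩ := hC.exists_le_minimal hx
  rwa [← hm b ⟨hb.prop, fun y hy hyb => le_antisymm hyb (hb.2 hy hyb)⟩]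

lemma add_smul_mem_preimg {C : Set (Cyl u v)} {a : ℤ × ℤ} {t : ℤ} :
    a + t • cylGen u v ∈ preimg u v C ↔ a ∈ preimg u v C := by
  rw [preimg, Set.mem_ofPred_eq, Set.mem_ofPred_eq, cmk_add_smul]

lemma IsCylShape.mem_preimg_of_le {C : Set (Cyl u v)} (hC : IsCylShape u v C) {a b c : ℤ × ℤ}
    (ha : a ∈ preimg u v C) (hb : b ∈ preimg u v C) (hac : a ≤ c) (hcb : c ≤ b) :
    c ∈ preimg u v C :=
  hC.2 _ _ _ ⟨a, c, rfl, rfl, hac.1, hac.2⟩ ⟨c, b, rfl, rfl, hcb.1, hcb.2⟩ ha hb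

lemma IsCylRibbon.fst_eq_or_snd_eq_of_le {C : Set (Cyl u v)} (hC : IsCylRibbon u v C)
    {a b : ℤ × ℤ} (ha : a ∈ preimg u v C) (hb : b ∈ preimg u v C) (hab : a ≤ b) :
    a.1 = b.1 ∨ a.2 = b.2 := by
  by_contra! h
  have h₁ : a.1 < b.1 := lt_of_le_of_ne hab.1 h.1
  have h₂ : a.2 < b.2 := lt_of_le_of_ne hab.2 h.2
  refine hC.2.2.2 ⟨a, ha, ?_, ?_, ?_⟩ <;>
    exact hC.1.mem_preimg_of_le ha hb (Prod.mk_le_mk.2 ⟨by omega, by omega⟩)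
      (Prod.mk_le_mk.2 ⟨by omega, by omega⟩)

lemma adjZ.fst_eq_or_snd_eq {a b : ℤ × ℤ} (h : adjZ a b) : a.1 = b.1 ∨ a.2 = b.2 := by
  rcases h with rfl | rfl | rfl | rfl <;> simp

end Cylinder

lemma eq_of_add_mul_eq {d d' t s m : ℤ} (hd : 0 ≤ d ∧ d < m) (hd' : 0 ≤ d' ∧ d' < m)
    (h : d + t * m = d' + s * m) : t = s := by
  have hdiv : ∀ {d t : ℤ}, 0 ≤ d ∧ d < m → (d + t * m) / m = t := fun hd => by
    rw [Int.add_mul_ediv_right _ _ (by omega), Int.ediv_eq_zero_of_lt hd.1 hd.2, zero_add]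
  rw [← hdiv (t := t) hd, h, hdiv hd']

lemma mk_fst_add_one (a : ℤ × ℤ) : (a.1 + 1, a.2) = a + (1, 0) := by
  ext <;> simp

lemma mk_snd_add_one (a : ℤ × ℤ) : (a.1, a.2 + 1) = a + (0, 1) := by
  ext <;> simp

section HookPosition

variable {u v : ℕ} {w : ℤ × ℤ}

/-- Rows of a diagram run along the first coordinate of `ℤ²`, the direction of `rowAdj`. -/
def hookPos (w : ℤ × ℤ) (p : ℕ × ℕ) : ℤ × ℤ := w + ((p.2 : ℤ), (p.1 : ℤ))

lemma hookPos_arm_succ (c : ℕ) : hookPos w (0, c) + (1, 0) = hookPos w (0, c + 1) := by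
  ext <;> simp [hookPos, add_assoc]

lemma hookPos_leg_succ (r : ℕ) : hookPos w (r, 0) + (0, 1) = hookPos w (r + 1, 0) := by
  ext <;> simp [hookPos, add_assoc]

lemma cmk_hookPos_arm_end (hu : 0 < u) :
    cmk u v (hookPos w (0, u - 1) + (1, 0)) = cmk u v (hookPos w (v, 0)) := by
  rw [hookPos_arm_succ, Nat.sub_add_cancel hu]
  simpa [hookPos] using cmk_arm_end_eq_leg_end w

end HookPosition

section RibbonBasedAt

variable {u v : ℕ} {C : Set (Cyl u v)} {w : ℤ × ℤ}

lemma fst_le_of_add_mem_preimg (hv : 0 < v) (hC : IsCylRibbon u v C) (hw : w ∈ preimg u v C)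
    {x : ℤ} (hx : w + (x, 0) ∈ preimg u v C) : x ≤ u := by
  by_contra! h
  have hx' := (add_smul_mem_preimg (t := 1)).2 hx
  simp only [add_smul_cylGen, Prod.fst_add, Prod.snd_add] at hx'
  rcases hC.fst_eq_or_snd_eq_of_le hw hx' (Prod.mk_le_mk.2 ⟨by omega, by omega⟩) with h' | h' <;>
    omega

lemma snd_le_of_add_mem_preimg (hu : 0 < u) (hC : IsCylRibbon u v C) (hw : w ∈ preimg u v C)
    {y : ℤ} (hy : w + (0, y) ∈ preimg u v C) : y ≤ v := by
  by_contra! h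
  have hy' := (add_smul_mem_preimg (t := -1)).2 hy
  simp only [add_smul_cylGen, Prod.fst_add, Prod.snd_add] at hy'
  rcases hC.fst_eq_or_snd_eq_of_le hw hy' (Prod.mk_le_mk.2 ⟨by omega, by omega⟩) with h' | h' <;>
    omega

def InBox (u v : ℕ) (w : ℤ × ℤ) (t : ℤ) (a : ℤ × ℤ) : Prop :=
  ∃ c : ℤ × ℤ, 0 ≤ c ∧ c.1 < u ∧ c.2 < v ∧ a = w + c + t • cylGen u v

lemma InBox.eq_of_fst_eq_or_snd_eq {t s : ℤ} {a b : ℤ × ℤ} (ha : InBox u v w t a)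
    (hb : InBox u v w s b) (h : a.1 = b.1 ∨ a.2 = b.2) : t = s := by
  obtain ⟨c, hc, hc₁, hc₂, rfl⟩ := ha
  obtain ⟨c', hc', hc₁', hc₂', rfl⟩ := hb
  rcases h with h | h <;> simp only [add_smul_cylGen, Prod.fst_add, Prod.snd_add] at h
  · have := eq_of_add_mul_eq (t := -t) (s := -s) ⟨hc.1, hc₁⟩ ⟨hc'.1, hc₁'⟩ (by linarith)
    omega
  · exact eq_of_add_mul_eq ⟨hc.2, hc₂⟩ ⟨hc'.2, hc₂'⟩ (by linarith)

lemma inBox_zero_of_reflTransGen (hu : 0 < u) (hv : 0 < v) {P : Set (ℤ × ℤ)}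
    (hP : ∀ a ∈ P, ∃ t, InBox u v w t a) {b : ℤ × ℤ}
    (h : ReflTransGen (fun p q => q ∈ P ∧ adjZ p q) w b) : InBox u v w 0 b := by
  induction h with
  | refl => exact ⟨0, le_rfl, by simpa using hu, by simpa using hv, by simp⟩
  | tail _ hstep ih =>
    obtain ⟨s, hs⟩ := hP _ hstep.1
    rwa [ih.eq_of_fst_eq_or_snd_eq hs hstep.2.fst_eq_or_snd_eq]

structure IsCylRibbonBasedAt (u v : ℕ) (C : Set (Cyl u v)) (w : ℤ × ℤ) : Prop where
  u_pos : 0 < u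
  v_pos : 0 < v
  ribbon : IsCylRibbon u v C
  mem : w ∈ preimg u v C
  base_cle : ∀ x ∈ C, cle u v (cmk u v w) x

namespace IsCylRibbonBasedAt

theorem exists_hookPos_of_mem_preimg (h : IsCylRibbonBasedAt u v C w) {a : ℤ × ℤ}
    (ha : a ∈ preimg u v C) : ∃ p ∈ hookCells u v, ∃ t : ℤ, a = hookPos w p + t • cylGen u v := by
  obtain ⟨t, hwa⟩ := cle_cmk_iff.1 (h.base_cle _ ha)
  obtain ⟨x, hx⟩ := Int.le.dest hwa.1
  obtain ⟨y, hy⟩ := Int.le.dest hwa.2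
  have hshift : a + t • cylGen u v = w + ((x : ℤ), (y : ℤ)) := Prod.ext hx.symm hy.symm
  have ha' : w + ((x : ℤ), (y : ℤ)) ∈ preimg u v C := hshift ▸ add_smul_mem_preimg.2 ha
  have hrep : a = w + ((x : ℤ), (y : ℤ)) + (-t) • cylGen u v := by
    rw [← hshift, neg_smul, add_neg_cancel_right]
  rcases h.ribbon.fst_eq_or_snd_eq_of_le h.mem ha'
    (le_add_of_nonneg_right (by simp [Prod.le_def])) with hxy | hxy
  · obtain rfl : x = 0 := by simpa using hxy
    have hyv := snd_le_of_add_mem_preimg h.u_pos h.ribbon h.mem (by simpa using ha')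
    rcases Nat.eq_zero_or_pos y with rfl | hy0
    · exact ⟨(0, 0), mem_hookCells.2 (by simp [h.u_pos]), -t, by simpa [hookPos] using hrep⟩
    · exact ⟨(y, 0), mem_hookCells.2 (by omega), -t, by simpa [hookPos] using hrep⟩
  · obtain rfl : y = 0 := by simpa using hxy
    have hxu := fst_le_of_add_mem_preimg h.v_pos h.ribbon h.mem (by simpa using ha')
    rcases (show x < u ∨ x = u by omega) with hxu | rfl
    · exact ⟨(0, x), mem_hookCells.2 (by simp [hxu]), -t, by simpa [hookPos] using hrep⟩
    · refine ⟨(v, 0), mem_hookCells.2 (by simp [h.v_pos]), -t - 1, ?_⟩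
      rw [hrep, add_smul_cylGen, add_smul_cylGen, hookPos]
      ext <;> simp only [Prod.fst_add, Prod.snd_add] <;> push_cast <;> ring

/-- If the arm stopped short of `u`, the ribbon would fall into the boxes
`w + [0, u) × [0, v) + t • (-u, v)`, no two of which are adjacent, and `w` could not be joined
to its translate `w + (-u, v)`. -/
theorem arm_end_mem_preimg (h : IsCylRibbonBasedAt u v C w) :
    w + ((u : ℤ), 0) ∈ preimg u v C := by
  have hu := h.u_pos
  by_contra hend
  have hbox : ∀ a ∈ preimg u v C, ∃ t, InBox u v w t a := by
    intro a ha
    obtain ⟨p, hp, t, rfl⟩ := h.exists_hookPos_of_mem_preimg ha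
    refine ⟨t, ((p.2 : ℤ), (p.1 : ℤ)), Prod.mk_le_mk.2 ⟨by simp, by simp⟩, ?_, ?_,
      by simp [hookPos]⟩
    · have := mem_hookCells.1 hp
      omega
    · rcases mem_hookCells.1 hp with ⟨hp1, -⟩ | ⟨-, hp1, hp2⟩
      · simp [hp1, h.v_pos]
      · refine lt_of_le_of_ne (by simpa using hp1) fun hpv => hend ?_
        have : hookPos w p = w + (0, (v : ℤ)) := by
          rw [Nat.cast_inj] at hpv
          simp [hookPos, hp2, hpv]
        rw [preimg, Set.mem_ofPred_eq, cmk_arm_end_eq_leg_end, ← this]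
        exact add_smul_mem_preimg.1 ha
  have h₀ := inBox_zero_of_reflTransGen h.u_pos h.v_pos hbox
    (h.ribbon.2.2.1 w (w + 1 • cylGen u v) h.mem (add_smul_mem_preimg.2 h.mem))
  have h₁ : InBox u v w 1 (w + 1 • cylGen u v) :=
    ⟨0, le_rfl, by simpa using h.u_pos, by simpa using h.v_pos, by simp⟩
  exact zero_ne_one (h₀.eq_of_fst_eq_or_snd_eq h₁ (Or.inl rfl))

lemma hookPos_mem_preimg (h : IsCylRibbonBasedAt u v C w) {p : ℕ × ℕ}
    (hp : p ∈ hookCells u v) : hookPos w p ∈ preimg u v C := by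
  have harm := h.arm_end_mem_preimg
  have hleg : w + (0, (v : ℤ)) ∈ preimg u v C := by
    rwa [preimg, Set.mem_ofPred_eq, ← cmk_arm_end_eq_leg_end]
  have hw : w ≤ hookPos w p := le_add_of_nonneg_right (Prod.mk_le_mk.2 ⟨by simp, by simp⟩)
  rcases mem_hookCells.1 hp with ⟨h₁, h₂⟩ | ⟨-, h₁, h₂⟩
  · exact h.ribbon.1.mem_preimg_of_le h.mem harm hw
      (add_le_add le_rfl (Prod.mk_le_mk.2 ⟨by omega, by omega⟩))
  · exact h.ribbon.1.mem_preimg_of_le h.mem hleg hw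
      (add_le_add le_rfl (Prod.mk_le_mk.2 ⟨by omega, by omega⟩))

lemma exists_arm_of_row_step (h : IsCylRibbonBasedAt u v C w) {a : ℤ × ℤ}
    (ha : a ∈ preimg u v C) (ha' : a + (1, 0) ∈ preimg u v C) :
    ∃ c < u, ∃ t : ℤ, a = hookPos w (0, c) + t • cylGen u v := by
  obtain ⟨p, hp, t, rfl⟩ := h.exists_hookPos_of_mem_preimg ha
  rw [add_right_comm, add_smul_mem_preimg, hookPos, add_assoc] at ha'
  rcases h.ribbon.fst_eq_or_snd_eq_of_le h.mem ha'
    (le_add_of_nonneg_right (Prod.mk_le_mk.2 ⟨by positivity, by positivity⟩)) with hp' | hp' <;>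
    simp only [Prod.fst_add, Prod.snd_add] at hp'
  · omega
  · exact ⟨p.2, by have := mem_hookCells.1 hp; omega, t, by simp [hookPos, (by omega : p.1 = 0)]⟩

lemma exists_leg_of_col_step (h : IsCylRibbonBasedAt u v C w) {a : ℤ × ℤ}
    (ha : a ∈ preimg u v C) (ha' : a + (0, 1) ∈ preimg u v C) :
    ∃ r < v, ∃ t : ℤ, a = hookPos w (r, 0) + t • cylGen u v := by
  obtain ⟨p, hp, t, rfl⟩ := h.exists_hookPos_of_mem_preimg ha
  rw [add_right_comm, add_smul_mem_preimg, hookPos, add_assoc] at ha'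
  rcases h.ribbon.fst_eq_or_snd_eq_of_le h.mem ha'
    (le_add_of_nonneg_right (Prod.mk_le_mk.2 ⟨by positivity, by positivity⟩)) with hp' | hp' <;>
    simp only [Prod.fst_add, Prod.snd_add] at hp'
  · have hp2 : p.2 = 0 := by omega
    have hp1 : (p.1 : ℤ) + 1 ≤ v :=
      snd_le_of_add_mem_preimg h.u_pos h.ribbon h.mem (by simpa [hp2] using ha')
    exact ⟨p.1, by omega, t, by simp [hookPos, hp2]⟩
  · omega

theorem bijOn_hookPos (h : IsCylRibbonBasedAt u v C w) :
    (hookCells u v).BijOn (cmk u v ∘ hookPos w) C := by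
  have hu := h.u_pos
  refine ⟨fun p hp => h.hookPos_mem_preimg hp, fun p hp q hq hpq => ?_, fun x hx => ?_⟩
  · obtain ⟨t, ht⟩ := cmk_eq_cmk_iff.1 hpq
    simp only [hookPos, add_smul_cylGen, Prod.ext_iff, Prod.fst_add, Prod.snd_add] at ht
    have hp' := mem_hookCells.1 hp
    have hq' := mem_hookCells.1 hq
    have ht0 : (0 : ℤ) = -t := eq_of_add_mul_eq (d := q.2) (d' := p.2) (m := u)
      ⟨by positivity, by omega⟩ ⟨by positivity, by omega⟩ (by linarith)
    obtain rfl : t = 0 := by omega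
    exact Prod.ext (by simpa using ht.2.symm) (by simpa using ht.1.symm)
  · obtain ⟨a, rfl⟩ := cmk_surjective x
    obtain ⟨p, hp, t, rfl⟩ := h.exists_hookPos_of_mem_preimg hx
    exact ⟨p, hp, (cmk_add_smul _ _).symm⟩

theorem cylOk_of_isHookTableau (h : IsCylRibbonBasedAt u v C w) {T : ℕ × ℕ → ℕ}
    {T' : Cyl u v → ℕ} (hT : ∀ p ∈ hookCells u v, T p = T' (cmk u v (hookPos w p)))
    (hTab : IsHookTableau u v T) (hwrap : T (0, u - 1) ≤ T (v, 0)) : CylOk u v C T' := by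
  have hu := h.u_pos
  refine ⟨?_, ?_⟩
  · rintro _ _ hx hy ⟨a, rfl, rfl⟩
    obtain ⟨c, hc, t, rfl⟩ := h.exists_arm_of_row_step hx (mk_fst_add_one a ▸ hy)
    rw [mk_fst_add_one, add_right_comm, cmk_add_smul, cmk_add_smul]
    rcases (show c + 1 < u ∨ c + 1 = u by omega) with hc' | hc'
    · rw [hookPos_arm_succ, ← hT _ (mem_hookCells.2 (by omega)),
        ← hT _ (mem_hookCells.2 (by omega))]
      exact hTab.1 c hc'
    · obtain rfl : c = u - 1 := by omega
      rw [cmk_hookPos_arm_end hu, ← hT _ (mem_hookCells.2 (by omega)),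
        ← hT _ (mem_hookCells.2 (by omega))]
      exact hwrap
  · rintro _ _ hx hy ⟨a, rfl, rfl⟩
    obtain ⟨r, hr, t, rfl⟩ := h.exists_leg_of_col_step hx (mk_snd_add_one a ▸ hy)
    rw [mk_snd_add_one, add_right_comm, cmk_add_smul, cmk_add_smul, hookPos_leg_succ,
      ← hT _ (mem_hookCells.2 (by omega)), ← hT _ (mem_hookCells.2 (by omega))]
    exact hTab.2 r hr

theorem isHookTableau_of_cylOk (h : IsCylRibbonBasedAt u v C w) {T : ℕ × ℕ → ℕ}
    {T' : Cyl u v → ℕ} (hT : ∀ p ∈ hookCells u v, T p = T' (cmk u v (hookPos w p)))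
    (hOk : CylOk u v C T') : IsHookTableau u v T ∧ T (0, u - 1) ≤ T (v, 0) := by
  have hu := h.u_pos
  have harm : ∀ c < u, (0, c) ∈ hookCells u v := fun c hc => mem_hookCells.2 (by simp [hc])
  have hleg : ∀ r ≤ v, (r, 0) ∈ hookCells u v := fun r hr => mem_hookCells.2 (by omega)
  refine ⟨⟨fun c hc => ?_, fun r hr => ?_⟩, ?_⟩
  · rw [hT _ (harm c (by omega)), hT _ (harm (c + 1) hc)]
    exact hOk.1 _ _ (h.hookPos_mem_preimg (harm c (by omega))) (h.hookPos_mem_preimg (harm _ hc))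
      ⟨_, rfl, by rw [mk_fst_add_one, hookPos_arm_succ]⟩
  · rw [hT _ (hleg r hr.le), hT _ (hleg (r + 1) hr)]
    exact hOk.2 _ _ (h.hookPos_mem_preimg (hleg r hr.le)) (h.hookPos_mem_preimg (hleg _ hr))
      ⟨_, rfl, by rw [mk_snd_add_one, hookPos_leg_succ]⟩
  · rw [hT _ (harm (u - 1) (by omega)), hT _ (hleg v le_rfl)]
    exact hOk.1 _ _ (h.hookPos_mem_preimg (harm _ (by omega)))
      (h.hookPos_mem_preimg (hleg v le_rfl))
      ⟨_, rfl, by rw [mk_fst_add_one, cmk_hookPos_arm_end hu]⟩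

theorem cylSchur_eq_hookWrapSeries (h : IsCylRibbonBasedAt u v C w) :
    cylSchur u v C = hookWrapSeries u v :=
  (tabSeries_eq_of_bijOn _ h.bijOn_hookPos fun _ _ hT =>
    ⟨fun hTab => h.cylOk_of_isHookTableau hT hTab.1 hTab.2, h.isHookTableau_of_cylOk hT⟩).symm

end IsCylRibbonBasedAt

end RibbonBasedAt

/-- The cylindric skew Schur function of the cylindric hook `H^{n-k}_k` (the cylindric ribbon
in `C_{k,n-k}` with a unique minimal element) equals the alternating sum
`∑_{j=0}^{n-k-1} (-1)^j s_{(n-k-j, 1^{k+j})}` of hook Schur functions. -/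
theorem stmt5 (n k : ℕ) (hk : 0 < k) (hkn : k < n) (C : Set (Cyl (n - k) k))
    (hC : IsCylRibbon (n - k) k C)
    (hmin : ∃! m, m ∈ C ∧ ∀ x ∈ C, cle (n - k) k x m → x = m) :
    cylSchur (n - k) k C =
      ∑ j ∈ Finset.range (n - k), ((-1 : ℚ) ^ j) • schur (hookFun (n - k - j) (k + j)) := by
  have hu : 0 < n - k := by omega
  obtain ⟨m, hmC, hle⟩ := exists_least_of_existsUnique_minimal hu hk hC.1.1 hmin
  obtain ⟨w, rfl⟩ := cmk_surjective m
  have hbase : IsCylRibbonBasedAt (n - k) k C w := ⟨hu, hk, hC, hmC, hle⟩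
  rw [hbase.cylSchur_eq_hookWrapSeries, hookWrapSeries_eq_sum hu]
end
end

section
/- For fixed k and n-k, the cylindric Schur functions s_{λ/d/∅}(x), over all cylindric shapes λ/d/∅ that are subposets of the cylinder C_{k,n-k}, are linearly independent in the ring of symmetric functions. -/
open scoped Classical
open Relation

noncomputable section

/-- Edgewise adjacency in `ℕ × ℕ`. -/
def adjN (a b : ℕ × ℕ) : Prop :=
  b = (a.1 + 1, a.2) ∨ a = (b.1 + 1, b.2) ∨ b = (a.1, a.2 + 1) ∨ a = (b.1, b.2 + 1)

/-- A ribbon: a nonempty edgewise connected set of cells with no `2 × 2` block. -/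
def IsRibbon (S : Set (ℕ × ℕ)) : Prop :=
  S.Nonempty ∧
  (∀ a b, a ∈ S → b ∈ S → Relation.ReflTransGen (fun p q => q ∈ S ∧ adjN p q) a b) ∧
  ¬ ∃ a : ℕ × ℕ, a ∈ S ∧ (a.1 + 1, a.2) ∈ S ∧ (a.1, a.2 + 1) ∈ S ∧ (a.1 + 1, a.2 + 1) ∈ S

/-- `sigma` is obtained from `tau` by adding one `n`-ribbon. -/
def IsRibbonAdd (n : ℕ) (tau sigma : ℕ → ℕ) : Prop :=
  (∀ i, tau i ≤ sigma i) ∧ IsPtn sigma ∧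
  Nat.card ↥(cells sigma \ cells tau) = n ∧ IsRibbon (cells sigma \ cells tau)

/-- The width (number of non-empty columns) of the skew shape `sigma/tau`. -/
def ribbonWidth (tau sigma : ℕ → ℕ) : ℕ :=
  Nat.card {c : ℕ // ∃ r, (r, c) ∈ cells sigma \ cells tau}

/-- `tau` is obtained from `lam` by adding `d` `n`-ribbons. -/
def AddsRibbons (n d : ℕ) (lam tau : ℕ → ℕ) : Prop :=
  ∃ f : ℕ → ℕ → ℕ, f 0 = lam ∧ f d = tau ∧ ∀ i < d, IsRibbonAdd n (f i) (f (i + 1))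

/-- The sign `ε(tau/lam) = (-1)^{∑ (n-k-width)}` over any chain of `d` `n`-ribbon additions
from `lam` to `tau` (the value is independent of the chain). -/
def epsSign (n k d : ℕ) (lam tau : ℕ → ℕ) : ℚ :=
  if h : ∃ f : ℕ → ℕ → ℕ, f 0 = lam ∧ f d = tau ∧ ∀ i < d, IsRibbonAdd n (f i) (f (i + 1)) then
    (-1 : ℚ) ^ (∑ i ∈ Finset.range d, (n - k - ribbonWidth (h.choose i) (h.choose (i + 1))))
  else 0

/-- Conjugate description of adding one `n`-ribbon running along the whole top of a shape
(starting in the rightmost column `n-k` and ending in column `1`). -/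
def fullRibbonConjStep (n k : ℕ) (c : ℕ → ℕ) : ℕ → ℕ :=
  fun i => if i = 0 then c (n - k - 1) + k + 1 else if i < n - k then c (i - 1) + 1 else 0

/-- The outer partition `Λ = lam^{[d]}`, obtained from `lam` by adding `d` full `n`-ribbons. -/
def outerShape (n k d : ℕ) (lam : ℕ → ℕ) : ℕ → ℕ :=
  conjPtn ((fullRibbonConjStep n k)^[d] (conjPtn lam))

/-- Embedding of a cell `(row, col)` into the cylinder `C_{k,n-k}`. -/
def toCyl (n k : ℕ) (rc : ℕ × ℕ) : Cyl (n - k) k := cmk (n - k) k ((rc.2 : ℤ), (rc.1 : ℤ))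

/-- The cylindric skew shape `lam/d/mu` as a subset of the cylinder `C_{k,n-k}`. -/
def ldmShape (n k d : ℕ) (lam mu : ℕ → ℕ) : Set (Cyl (n - k) k) :=
  toCyl n k '' (cells (outerShape n k d lam) \ cells mu)

/-- Conditions for `lam/d/mu` to describe a genuine cylindric skew shape in `C_{k,n-k}`:
`lam ⊆ k × (n-k)` and `mu` a partition compatible with the cylinder and contained in `Λ`. -/
def ValidLDM (n k d : ℕ) (lam mu : ℕ → ℕ) : Prop :=
  IsPtn lam ∧ FitsBox lam k (n - k) ∧ IsPtn mu ∧ mu 0 ≤ n - k ∧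
  conjPtn mu 0 ≤ conjPtn mu (n - k - 1) + k ∧ ∀ i, mu i ≤ outerShape n k d lam i

/-- Restriction of a power series to the first `N` variables (set `x_i = 0` for `i ≥ N`). -/
def restrictVars (N : ℕ) (f : FPS) : FPS :=
  fun e => if ∀ i ∈ e.support, i < N then MvPowerSeries.coeff e f else 0

/-- Schur-positivity in `N` variables. -/
def SchurPosN (N : ℕ) (f : FPS) : Prop :=
  ∃ (S : Finset (ℕ → ℕ)) (c : (ℕ → ℕ) → ℚ),
    (∀ p ∈ S, IsPtn p) ∧ (∀ p ∈ S, 0 ≤ c p) ∧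
    f = ∑ p ∈ S, c p • restrictVars N (schur p)


/-! The outer shape `Λ = λ^[d]` determines `(λ, d)`: peeling off a full ribbon is injective, and
each full ribbon pushes the first column past `k`, which `λ` (inside the `k × (n-k)` box) never
does. The cylindric Schur functions of the shapes `Λ/d/∅` are then unitriangular with respect to
dominance: entries of a cylindric tableau strictly increase down columns, so an entry is at least
its row index and the content of a tableau of shape `Λ'` is dominated by `Λ'`, with equality only
for the tableau whose entries are the row indices. Applying the coefficient of `x^Λ` for a
dominance-maximal `Λ` to a vanishing linear combination kills the coefficient of `Λ`. -/

theorem linearIndependent_of_triangular {ι R M P : Type*} [Ring R] [NoZeroDivisors R]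
    [AddCommGroup M] [Module R M] [PartialOrder P] (f : ι → M) (φ : ι → M →ₗ[R] R)
    (w : ι → P) (hinj : Function.Injective w) (hdiag : ∀ i, φ i (f i) ≠ 0)
    (htri : ∀ i j, φ i (f j) ≠ 0 → w i ≤ w j) : LinearIndependent R f := by
  rw [linearIndependent_iff']
  intro s g hsum i hi
  by_contra hgi
  obtain ⟨i₀, hi₀, hmax⟩ :=
    Finset.exists_maximalFor w {j ∈ s | g j ≠ 0} ⟨i, Finset.mem_filter.2 ⟨hi, hgi⟩⟩
  obtain ⟨hi₀s, hgi₀⟩ := Finset.mem_filter.1 hi₀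
  have hoff : ∀ j ∈ s, j ≠ i₀ → g j * φ i₀ (f j) = 0 := by
    intro j hj hji
    by_contra hne
    obtain ⟨hgj, hφ⟩ := mul_ne_zero_iff.1 hne
    have hle := htri i₀ j hφ
    exact hji (hinj (le_antisymm (hmax (Finset.mem_filter.2 ⟨hj, hgj⟩) hle) hle))
  have := congrArg (φ i₀) hsum
  simp only [map_sum, map_smul, smul_eq_mul, map_zero] at this
  rw [Finset.sum_eq_single_of_mem i₀ hi₀s hoff] at this
  exact mul_ne_zero hgi₀ (hdiag i₀) this

section Partitions

variable {p : ℕ → ℕ}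

theorem conjPtn_lt_iff (hp : IsPtn p) {i j : ℕ} : i < conjPtn p j ↔ j < p i := by
  have hex : ∃ m, p m ≤ j := hp.2.imp fun _ h => h.le.trans (Nat.zero_le j)
  have hset : {i | j < p i} = Set.Iio (Nat.find hex) := by
    ext i
    refine ⟨fun h => ?_, fun h => not_le.1 (Nat.find_min hex h)⟩
    by_contra hi
    exact (Nat.find_spec hex).not_gt (h.trans_le (hp.1 (not_lt.1 hi)))
  have hcard : conjPtn p j = Nat.find hex := by
    change Nat.card ↥{i | j < p i} = _
    rw [hset, Nat.card_coe_set_eq, Set.ncard_Iio_nat]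
  rw [hcard, ← Set.mem_Iio, ← hset]
  rfl

theorem conjPtn_antitone (hp : IsPtn p) : Antitone (conjPtn p) :=
  fun _ _ hj => le_of_forall_lt fun _ hi =>
    (conjPtn_lt_iff hp).2 ((hj.trans_lt ((conjPtn_lt_iff hp).1 hi)))

theorem conjPtn_le_of_eq_zero (hp : IsPtn p) {m : ℕ} (hm : p m = 0) (j : ℕ) :
    conjPtn p j ≤ m :=
  le_of_forall_lt fun i hi => by
    by_contra hmi
    have := (conjPtn_lt_iff hp).1 hi
    have := hp.1 (not_lt.1 hmi)
    omega

theorem conjPtn_eq_zero (hp : IsPtn p) {j : ℕ} (hj : p 0 ≤ j) : conjPtn p j = 0 :=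
  Nat.eq_zero_of_not_pos fun h => ((conjPtn_lt_iff hp).1 h).not_ge hj

theorem isPtn_conjPtn (hp : IsPtn p) : IsPtn (conjPtn p) :=
  ⟨conjPtn_antitone hp, p 0, conjPtn_eq_zero hp le_rfl⟩

theorem conjPtn_conjPtn (hp : IsPtn p) : conjPtn (conjPtn p) = p :=
  funext fun i => eq_of_forall_lt_iff fun j => by
    rw [conjPtn_lt_iff (isPtn_conjPtn hp), conjPtn_lt_iff hp]

theorem IsPtn.finite_support (hp : IsPtn p) : (Function.support p).Finite := by
  obtain ⟨N, hN⟩ := hp.2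
  refine (Set.finite_Iio N).subset fun i hi => ?_
  by_contra hiN
  exact hi (Nat.eq_zero_of_le_zero (hN ▸ hp.1 (not_lt.1 hiN)))

/-- Pointwise comparison of partial sums is the dominance order. -/
def partialSums (p : ℕ → ℕ) : ℕ → ℕ := fun v => ∑ w ∈ Finset.range v, p w

theorem partialSums_injective : Function.Injective partialSums := fun p q h =>
  funext fun v => by
    have hv := congrFun h v
    have hv₁ := congrFun h (v + 1)
    simp only [partialSums, Finset.sum_range_succ] at hv hv₁
    omega

end Partitions

section Counting

variable {X : Type}

theorem ncard_sep_lt_eq_sum {S : Set X} (hS : S.Finite) (f : X → ℕ) (v : ℕ) :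
    {x ∈ S | f x < v}.ncard = ∑ w ∈ Finset.range v, {x ∈ S | f x = w}.ncard := by
  induction v with
  | zero => simp
  | succ v ih =>
    have hsplit : {x ∈ S | f x < v + 1} = {x ∈ S | f x < v} ∪ {x ∈ S | f x = v} := by
      ext x
      simp only [Set.mem_union, Set.mem_sep_iff]
      rw [Nat.lt_succ_iff_lt_or_eq]
      tauto
    rw [Finset.sum_range_succ, ← ih, hsplit, Set.ncard_union_eq _ (hS.subset fun _ h => h.1)
      (hS.subset fun _ h => h.1)]
    exact Set.disjoint_left.2 fun x hx hx' => by simp_all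

theorem ncard_sep_image {Y : Type} {C : Set X} {f : X → Y} (hf : Set.InjOn f C) (T : Y → ℕ)
    (v : ℕ) : {y ∈ f '' C | T y = v}.ncard = {x ∈ C | T (f x) = v}.ncard := by
  rw [← (hf.mono fun _ h => h.1).ncard_image]
  congr 1
  ext y
  simp only [Set.mem_sep_iff, Set.mem_image]
  grind

end Counting

section Cells

variable {p : ℕ → ℕ}

theorem cells_finite (hp : IsPtn p) : (cells p).Finite := by
  obtain ⟨N, hN⟩ := hp.2
  refine ((Set.finite_Iio N).prod (Set.finite_Iio (p 0))).subset fun a ha => ⟨?_, ?_⟩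
  · by_contra h
    have := hp.1 (not_lt.1 h)
    simp only [cells, Set.mem_ofPred_eq] at ha
    omega
  · exact ha.trans_le (hp.1 (Nat.zero_le _))

theorem ncard_cells_fst_eq (p : ℕ → ℕ) (w : ℕ) : {a ∈ cells p | a.1 = w}.ncard = p w := by
  have : {a ∈ cells p | a.1 = w} = (fun c => (w, c)) '' Set.Iio (p w) := by
    ext ⟨r, c⟩
    simp only [Set.mem_sep_iff, Set.mem_image, Set.mem_Iio, Prod.mk.injEq]
    constructor
    · rintro ⟨h, rfl⟩
      exact ⟨c, h, rfl, rfl⟩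
    · rintro ⟨c, h, rfl, rfl⟩
      exact ⟨h, rfl⟩
  rw [this, Set.ncard_image_of_injective _ (Prod.mk_right_injective w), Set.ncard_Iio_nat]

theorem ncard_cells_fst_lt (hp : IsPtn p) (v : ℕ) :
    {a ∈ cells p | a.1 < v}.ncard = partialSums p v := by
  simp only [ncard_sep_lt_eq_sum (cells_finite hp), ncard_cells_fst_eq, partialSums]

theorem snd_lt_of_mem_cells {n k : ℕ} (hp : IsPtn p) (hpw : p 0 ≤ n - k) {a : ℕ × ℕ}
    (ha : a ∈ cells p) : a.2 < n - k :=
  (ha.trans_le (hp.1 (Nat.zero_le _))).trans_le hpw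

end Cells

section OuterShape

variable {n k : ℕ}

/-- Column lengths of a cylindric shape in `C_{k,n-k}`, such as the conjugate of `λ^[d]`. -/
def IsCylConj (n k : ℕ) (c : ℕ → ℕ) : Prop :=
  Antitone c ∧ (∀ i, n - k ≤ i → c i = 0) ∧ c 0 ≤ c (n - k - 1) + k

theorem IsCylConj.isPtn {c : ℕ → ℕ} (hc : IsCylConj n k c) : IsPtn c :=
  ⟨hc.1, n - k, hc.2.1 _ le_rfl⟩

theorem isCylConj_conjPtn {lam : ℕ → ℕ} (hlam : IsPtn lam) (hbox : FitsBox lam k (n - k)) :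
    IsCylConj n k (conjPtn lam) :=
  ⟨conjPtn_antitone hlam, fun _ hi => conjPtn_eq_zero hlam (hbox.1.trans hi),
    (conjPtn_le_of_eq_zero hlam hbox.2 0).trans (Nat.le_add_left _ _)⟩

theorem fullRibbonConjStep_of_le (hw : 0 < n - k) (c : ℕ → ℕ) {i : ℕ} (hi : n - k ≤ i) :
    fullRibbonConjStep n k c i = 0 := by
  simp only [fullRibbonConjStep]
  rw [if_neg (by omega), if_neg (by omega)]

theorem IsCylConj.fullRibbonConjStep (hw : 0 < n - k) {c : ℕ → ℕ} (hc : IsCylConj n k c) :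
    IsCylConj n k (fullRibbonConjStep n k c) := by
  obtain ⟨hanti, -, hcyl⟩ := hc
  refine ⟨fun i j hij => ?_, fun _ hi => fullRibbonConjStep_of_le hw c hi, ?_⟩
  · have := hanti (Nat.sub_le_sub_right hij 1)
    have := hanti (Nat.zero_le (j - 1))
    simp only [_root_.fullRibbonConjStep]
    split_ifs <;> omega
  · have := hanti (Nat.sub_le (n - k - 1) 1)
    simp only [_root_.fullRibbonConjStep]
    split_ifs <;> omega

theorem isCylConj_iterate (hw : 0 < n - k) {c : ℕ → ℕ} (hc : IsCylConj n k c) (d : ℕ) :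
    IsCylConj n k ((fullRibbonConjStep n k)^[d] c) := by
  induction d with
  | zero => exact hc
  | succ d ih => rw [Function.iterate_succ_apply']; exact ih.fullRibbonConjStep hw

theorem isPtn_outerShape (hw : 0 < n - k) {lam : ℕ → ℕ} (hlam : IsPtn lam)
    (hbox : FitsBox lam k (n - k)) (d : ℕ) : IsPtn (outerShape n k d lam) :=
  isPtn_conjPtn (isCylConj_iterate hw (isCylConj_conjPtn hlam hbox) d).isPtn

theorem outerShape_zero_le (hw : 0 < n - k) {lam : ℕ → ℕ} (hlam : IsPtn lam)
    (hbox : FitsBox lam k (n - k)) (d : ℕ) : outerShape n k d lam 0 ≤ n - k :=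
  have hc := isCylConj_iterate hw (isCylConj_conjPtn hlam hbox) d
  conjPtn_le_of_eq_zero hc.isPtn (hc.2.1 _ le_rfl) 0

theorem lt_fullRibbonConjStep_zero (c : ℕ → ℕ) : k < fullRibbonConjStep n k c 0 := by
  simp only [fullRibbonConjStep, if_pos]
  omega

theorem iterate_fullRibbonConjStep_of_le (hw : 0 < n - k) {c : ℕ → ℕ}
    (hc : ∀ i, n - k ≤ i → c i = 0) (d : ℕ) {i : ℕ} (hi : n - k ≤ i) :
    (fullRibbonConjStep n k)^[d] c i = 0 := by
  cases d with
  | zero => exact hc i hi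
  | succ d => rw [Function.iterate_succ_apply']; exact fullRibbonConjStep_of_le hw _ hi

theorem fullRibbonConjStep_inj {c₁ c₂ : ℕ → ℕ} (h₁ : ∀ i, n - k ≤ i → c₁ i = 0)
    (h₂ : ∀ i, n - k ≤ i → c₂ i = 0)
    (h : fullRibbonConjStep n k c₁ = fullRibbonConjStep n k c₂) : c₁ = c₂ := by
  funext i
  have h0 := congrFun h 0
  have hi := congrFun h (i + 1)
  simp only [fullRibbonConjStep, if_pos, Nat.add_sub_cancel, Nat.succ_ne_zero, if_false]
    at h0 hi
  by_cases hin : n - k ≤ i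
  · rw [h₁ i hin, h₂ i hin]
  · by_cases hi' : i + 1 < n - k
    · rw [if_pos hi', if_pos hi'] at hi; omega
    · obtain rfl : i = n - k - 1 := by omega
      omega

theorem iterate_fullRibbonConjStep_inj (hw : 0 < n - k) {c₁ c₂ : ℕ → ℕ}
    (h₁ : ∀ i, n - k ≤ i → c₁ i = 0) (h₂ : ∀ i, n - k ≤ i → c₂ i = 0)
    (h₁k : c₁ 0 ≤ k) (h₂k : c₂ 0 ≤ k) {d₁ d₂ : ℕ}
    (h : (fullRibbonConjStep n k)^[d₁] c₁ = (fullRibbonConjStep n k)^[d₂] c₂) :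
    d₁ = d₂ ∧ c₁ = c₂ := by
  induction d₁ generalizing d₂ with
  | zero =>
    cases d₂ with
    | zero => exact ⟨rfl, h⟩
    | succ d₂ =>
      rw [Function.iterate_succ_apply'] at h
      have := congrFun h 0 ▸ lt_fullRibbonConjStep_zero (n := n) _
      exact absurd h₁k this.not_ge
  | succ d₁ ih =>
    cases d₂ with
    | zero =>
      rw [Function.iterate_succ_apply'] at h
      have := congrFun h 0 ▸ lt_fullRibbonConjStep_zero (n := n) _
      exact absurd h₂k this.not_ge
    | succ d₂ =>
      rw [Function.iterate_succ_apply', Function.iterate_succ_apply'] at h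
      obtain ⟨rfl, hc⟩ := ih (fullRibbonConjStep_inj
        (fun _ => iterate_fullRibbonConjStep_of_le hw h₁ _)
        (fun _ => iterate_fullRibbonConjStep_of_le hw h₂ _) h)
      exact ⟨rfl, hc⟩

theorem outerShape_inj (hw : 0 < n - k) {lam₁ lam₂ : ℕ → ℕ} {d₁ d₂ : ℕ}
    (hlam₁ : IsPtn lam₁) (hbox₁ : FitsBox lam₁ k (n - k))
    (hlam₂ : IsPtn lam₂) (hbox₂ : FitsBox lam₂ k (n - k))
    (h : outerShape n k d₁ lam₁ = outerShape n k d₂ lam₂) :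
    lam₁ = lam₂ ∧ d₁ = d₂ := by
  have hc₁ := isCylConj_conjPtn hlam₁ hbox₁
  have hc₂ := isCylConj_conjPtn hlam₂ hbox₂
  have hiter := congrArg conjPtn h
  rw [outerShape, outerShape, conjPtn_conjPtn (isCylConj_iterate hw hc₁ d₁).isPtn,
    conjPtn_conjPtn (isCylConj_iterate hw hc₂ d₂).isPtn] at hiter
  obtain ⟨hd, hconj⟩ := iterate_fullRibbonConjStep_inj hw hc₁.2.1 hc₂.2.1
    (conjPtn_le_of_eq_zero hlam₁ hbox₁.2 0) (conjPtn_le_of_eq_zero hlam₂ hbox₂.2 0) hiter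
  refine ⟨?_, hd⟩
  rw [← conjPtn_conjPtn hlam₁, hconj, conjPtn_conjPtn hlam₂]

end OuterShape

section Cylinder

theorem cmk_add (u v : ℕ) (a b : ℤ × ℤ) : cmk u v (a + b) = cmk u v a + cmk u v b :=
  QuotientAddGroup.mk_add _ a b

theorem cmk_eq_cmk_iff_s15 {u v : ℕ} {c c' r r' : ℤ} (hc : 0 ≤ c) (hcu : c < u) (hc' : 0 ≤ c')
    (hcu' : c' < u) : cmk u v (c, r) = cmk u v (c', r') ↔ c = c' ∧ r = r' := by
  refine ⟨fun h => ?_, fun h => by rw [h.1, h.2]⟩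
  obtain ⟨z, hz⟩ := AddSubgroup.mem_zmultiples_iff.1 (QuotientAddGroup.eq.1 h)
  simp only [Prod.ext_iff, Prod.smul_fst, Prod.smul_snd, Prod.fst_add, Prod.snd_add,
    Prod.fst_neg, Prod.snd_neg, smul_eq_mul] at hz
  have hzu : z * (u : ℤ) = c - c' := by linear_combination -hz.1
  have hz0 : z * (u : ℤ) = 0 :=
    Int.eq_zero_of_abs_lt_dvd (dvd_mul_left _ _) (abs_lt.2 ⟨by omega, by omega⟩)
  obtain rfl : z = 0 := (mul_eq_zero.1 hz0).resolve_right (by omega)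
  omega

theorem cmk_wrap (u v : ℕ) (r : ℤ) : cmk u v (u, r) = cmk u v (0, r + v) :=
  QuotientAddGroup.eq.2 (AddSubgroup.mem_zmultiples_iff.2 ⟨1, by ext <;> simp⟩)

variable {n k : ℕ} {a b : ℕ × ℕ}

theorem toCyl_inj (ha : a.2 < n - k) (hb : b.2 < n - k) :
    toCyl n k a = toCyl n k b ↔ a = b := by
  rw [toCyl, toCyl, cmk_eq_cmk_iff_s15 (by omega) (by omega) (by omega) (by omega), Prod.ext_iff]
  omega

theorem colAdj_toCyl (r c : ℕ) : colAdj (n - k) k (toCyl n k (r, c)) (toCyl n k (r + 1, c)) :=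
  ⟨(c, r), rfl, by simp [toCyl]⟩

theorem cmk_shift_of_toCyl_eq {q : ℤ × ℤ} (hq : toCyl n k a = cmk (n - k) k q) (s t : ℤ) :
    cmk (n - k) k (q.1 + s, q.2 + t) = cmk (n - k) k (a.2 + s, a.1 + t) := by
  rw [show (q.1 + s, q.2 + t) = q + (s, t) from rfl, cmk_add, ← hq, toCyl, ← cmk_add]
  rfl

theorem colAdj_toCyl_fst (ha : a.2 < n - k) (hb : b.2 < n - k)
    (h : colAdj (n - k) k (toCyl n k a) (toCyl n k b)) : b.1 = a.1 + 1 := by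
  obtain ⟨q, hq, hqb⟩ := h
  have hb' : toCyl n k b = toCyl n k (a.1 + 1, a.2) := by
    have := cmk_shift_of_toCyl_eq hq 0 1
    rw [add_zero, add_zero] at this
    rw [hqb, this, toCyl]
    simp
  rw [(toCyl_inj hb (b := (a.1 + 1, a.2)) ha).1 hb']

theorem rowAdj_toCyl_fst_le (ha : a.2 < n - k) (hb : b.2 < n - k)
    (h : rowAdj (n - k) k (toCyl n k a) (toCyl n k b)) : a.1 ≤ b.1 := by
  obtain ⟨q, hq, hqb⟩ := h
  have hb' : toCyl n k b = cmk (n - k) k ((a.2 + 1 : ℕ), a.1) := by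
    have := cmk_shift_of_toCyl_eq hq 1 0
    rw [add_zero, add_zero] at this
    rw [hqb, this]
    simp
  rcases lt_or_eq_of_le (show a.2 + 1 ≤ n - k from ha) with hlt | heq
  · change toCyl n k b = toCyl n k (a.1, a.2 + 1) at hb'
    rw [(toCyl_inj hb (b := (a.1, a.2 + 1)) hlt).1 hb']
  · rw [heq, cmk_wrap] at hb'
    have hwrap : toCyl n k b = toCyl n k (a.1 + k, 0) := by rw [hb', toCyl]; simp
    rw [(toCyl_inj hb (b := (a.1 + k, 0)) (by omega)).1 hwrap]
    exact Nat.le_add_right _ _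

end Cylinder

section RowShape

def IsCylSSYT (u v : ℕ) (C : Set (Cyl u v)) (e : ℕ → ℕ) (T : Cyl u v → ℕ) : Prop :=
  CylOk u v C T ∧ (∀ x, x ∉ C → T x = 0) ∧ ∀ i, {x ∈ C | T x = i}.ncard = e i

theorem coeff_cylSchur (u v : ℕ) (C : Set (Cyl u v)) (e : ℕ →₀ ℕ) :
    MvPowerSeries.coeff e (cylSchur u v C) = Nat.card {T // IsCylSSYT u v C e T} := by
  simp only [IsCylSSYT, ← Nat.card_coe_set_eq]
  rfl

variable {n k : ℕ} {p : ℕ → ℕ} {T : Cyl (n - k) k → ℕ}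

theorem toCyl_injOn_cells (hp : IsPtn p) (hpw : p 0 ≤ n - k) :
    Set.InjOn (toCyl n k) (cells p) := fun _ ha _ hb h =>
  (toCyl_inj (snd_lt_of_mem_cells hp hpw ha) (snd_lt_of_mem_cells hp hpw hb)).1 h

theorem fst_le_of_cylOk (hp : Antitone p) (hT : CylOk (n - k) k (toCyl n k '' cells p) T)
    {a : ℕ × ℕ} (ha : a ∈ cells p) : a.1 ≤ T (toCyl n k a) := by
  obtain ⟨r, c⟩ := a
  induction r with
  | zero => exact Nat.zero_le _
  | succ r ih =>
    have hrc : (r, c) ∈ cells p := lt_of_lt_of_le ha (hp (Nat.le_succ r))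
    have := hT.2 _ _ (Set.mem_image_of_mem _ hrc) (Set.mem_image_of_mem _ ha) (colAdj_toCyl r c)
    exact Nat.succ_le_of_lt ((ih hrc).trans_lt this)

theorem ncard_cells_lt_of_isCylSSYT (hp : IsPtn p) (hpw : p 0 ≤ n - k) {e : ℕ → ℕ}
    (hT : IsCylSSYT (n - k) k (toCyl n k '' cells p) e T) (v : ℕ) :
    {a ∈ cells p | T (toCyl n k a) < v}.ncard = partialSums e v := by
  rw [ncard_sep_lt_eq_sum (cells_finite hp), partialSums]
  refine Finset.sum_congr rfl fun w _ => ?_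
  rw [← ncard_sep_image (toCyl_injOn_cells hp hpw), hT.2.2 w]

theorem partialSums_le_of_isCylSSYT (hp : IsPtn p) (hpw : p 0 ≤ n - k) {e : ℕ → ℕ}
    (hT : IsCylSSYT (n - k) k (toCyl n k '' cells p) e T) : partialSums e ≤ partialSums p :=
  fun v => by
    rw [← ncard_cells_lt_of_isCylSSYT hp hpw hT, ← ncard_cells_fst_lt hp]
    exact Set.ncard_le_ncard
      (fun a ⟨ha, hv⟩ => ⟨ha, (fst_le_of_cylOk hp.1 hT.1 ha).trans_lt hv⟩)
      ((cells_finite hp).subset fun _ h => h.1)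

theorem isCylSSYT_self_apply (hp : IsPtn p) (hpw : p 0 ≤ n - k)
    (hT : IsCylSSYT (n - k) k (toCyl n k '' cells p) p T) {a : ℕ × ℕ} (ha : a ∈ cells p) :
    T (toCyl n k a) = a.1 := by
  have hrows : {b ∈ cells p | T (toCyl n k b) < a.1 + 1} = {b ∈ cells p | b.1 < a.1 + 1} := by
    refine Set.eq_of_subset_of_ncard_le
      (fun b ⟨hb, hv⟩ => ⟨hb, (fst_le_of_cylOk hp.1 hT.1 hb).trans_lt hv⟩) ?_
      ((cells_finite hp).subset fun _ h => h.1)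
    rw [ncard_cells_lt_of_isCylSSYT hp hpw hT, ncard_cells_fst_lt hp]
  have : a ∈ {b ∈ cells p | T (toCyl n k b) < a.1 + 1} := hrows ▸ ⟨ha, Nat.lt_succ_self _⟩
  exact le_antisymm (Nat.le_of_lt_succ this.2) (fst_le_of_cylOk hp.1 hT.1 ha)

def rowFilling (n k : ℕ) (p : ℕ → ℕ) (x : Cyl (n - k) k) : ℕ :=
  if x ∈ toCyl n k '' cells p then (Function.invFunOn (toCyl n k) (cells p) x).1 else 0

theorem rowFilling_toCyl (hp : IsPtn p) (hpw : p 0 ≤ n - k) {a : ℕ × ℕ}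
    (ha : a ∈ cells p) :
    rowFilling n k p (toCyl n k a) = a.1 := by
  rw [rowFilling, if_pos (Set.mem_image_of_mem _ ha),
    (toCyl_injOn_cells hp hpw).leftInvOn_invFunOn ha]

theorem isCylSSYT_rowFilling (hp : IsPtn p) (hpw : p 0 ≤ n - k) :
    IsCylSSYT (n - k) k (toCyl n k '' cells p) p (rowFilling n k p) := by
  have hsnd := fun {a} (ha : a ∈ cells p) => snd_lt_of_mem_cells hp hpw ha
  refine ⟨⟨?_, ?_⟩, fun x hx => if_neg hx, fun i => ?_⟩
  · rintro _ _ ⟨a, ha, rfl⟩ ⟨b, hb, rfl⟩ hab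
    rw [rowFilling_toCyl hp hpw ha, rowFilling_toCyl hp hpw hb]
    exact rowAdj_toCyl_fst_le (hsnd ha) (hsnd hb) hab
  · rintro _ _ ⟨a, ha, rfl⟩ ⟨b, hb, rfl⟩ hab
    rw [rowFilling_toCyl hp hpw ha, rowFilling_toCyl hp hpw hb,
      colAdj_toCyl_fst (hsnd ha) (hsnd hb) hab]
    exact Nat.lt_succ_self _
  · rw [ncard_sep_image (toCyl_injOn_cells hp hpw), ← ncard_cells_fst_eq p i]
    congr 1
    ext a
    exact and_congr_right fun ha => by rw [rowFilling_toCyl hp hpw ha]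

theorem eq_rowFilling_of_isCylSSYT (hp : IsPtn p) (hpw : p 0 ≤ n - k)
    (hT : IsCylSSYT (n - k) k (toCyl n k '' cells p) p T) : T = rowFilling n k p := by
  funext x
  by_cases hx : x ∈ toCyl n k '' cells p
  · obtain ⟨a, ha, rfl⟩ := hx
    rw [isCylSSYT_self_apply hp hpw hT ha, rowFilling_toCyl hp hpw ha]
  · rw [hT.2.1 x hx, rowFilling, if_neg hx]

theorem coeff_cylSchur_toCyl_self (hp : IsPtn p) (hpw : p 0 ≤ n - k) {e : ℕ →₀ ℕ}
    (he : ⇑e = p) : MvPowerSeries.coeff e (cylSchur (n - k) k (toCyl n k '' cells p)) = 1 := by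
  rw [coeff_cylSchur, he, Nat.cast_eq_one, Nat.card_eq_one_iff_unique]
  refine ⟨⟨fun T₁ T₂ => Subtype.ext ?_⟩, ⟨⟨_, isCylSSYT_rowFilling hp hpw⟩⟩⟩
  rw [eq_rowFilling_of_isCylSSYT hp hpw T₁.2, eq_rowFilling_of_isCylSSYT hp hpw T₂.2]

theorem partialSums_le_of_coeff_cylSchur_ne_zero (hp : IsPtn p) (hpw : p 0 ≤ n - k)
    {e : ℕ →₀ ℕ}
    (h : MvPowerSeries.coeff e (cylSchur (n - k) k (toCyl n k '' cells p)) ≠ 0) :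
    partialSums e ≤ partialSums p := by
  rw [coeff_cylSchur, Nat.cast_ne_zero] at h
  obtain ⟨T, hT⟩ := (Nat.card_ne_zero.1 h).1
  exact partialSums_le_of_isCylSSYT hp hpw hT

end RowShape

theorem ldmShape_empty (n k d : ℕ) (lam : ℕ → ℕ) :
    ldmShape n k d lam (fun _ => 0) = toCyl n k '' cells (outerShape n k d lam) := by
  simp [ldmShape, cells]

theorem stmt15_general (n k : ℕ) (hkn : k < n) :
    LinearIndependent ℚ
      (fun q : {q : (ℕ → ℕ) × ℕ // IsPtn q.1 ∧ FitsBox q.1 k (n - k)} =>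
        cylSchur (n - k) k (ldmShape n k q.1.2 q.1.1 (fun _ => 0))) := by
  have hw : 0 < n - k := by omega
  have hΛ := fun q : {q : (ℕ → ℕ) × ℕ // IsPtn q.1 ∧ FitsBox q.1 k (n - k)} =>
    isPtn_outerShape hw q.2.1 q.2.2 q.1.2
  have hΛw := fun q : {q : (ℕ → ℕ) × ℕ // IsPtn q.1 ∧ FitsBox q.1 k (n - k)} =>
    outerShape_zero_le hw q.2.1 q.2.2 q.1.2
  simp only [ldmShape_empty]
  refine linearIndependent_of_triangular _
    (fun q => MvPowerSeries.coeff (Finsupp.ofSupportFinite _ (hΛ q).finite_support))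
    (fun q => partialSums (outerShape n k q.1.2 q.1.1)) ?_ (fun q => ?_) (fun q r h => ?_)
  · intro q r h
    obtain ⟨hlam, hd⟩ := outerShape_inj hw q.2.1 q.2.2 r.2.1 r.2.2 (partialSums_injective h)
    exact Subtype.ext (Prod.ext hlam hd)
  · rw [coeff_cylSchur_toCyl_self (hΛ q) (hΛw q) Finsupp.ofSupportFinite_coe]
    exact one_ne_zero
  · have := partialSums_le_of_coeff_cylSchur_ne_zero (hΛ r) (hΛw r) h
    rwa [Finsupp.ofSupportFinite_coe] at this

/-- For fixed `k` and `n-k`, the cylindric Schur functions `s_{λ/d/∅}(x)`, over all cylindric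
shapes `λ/d/∅ ⊆ C_{k,n-k}`, are linearly independent. -/
theorem stmt15 (n k : ℕ) (hk : 0 < k) (hkn : k < n) :
    LinearIndependent ℚ
      (fun q : {q : (ℕ → ℕ) × ℕ // IsPtn q.1 ∧ FitsBox q.1 k (n - k)} =>
        cylSchur (n - k) k (ldmShape n k q.1.2 q.1.1 (fun _ => 0))) :=
  stmt15_general n k hkn
end
end
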